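/- arXiv:2008.10765 — 10 statements merged into one kernel-verified Lean document; each statement's English description precedes it below -/
import Mathlib

section
/- Let e_1 ≤ ⋯ ≤ e_k be integers, let Γ(\vec{e}) be the Young diagram whose n-th column has h_{\vec{e}}(n) boxes, where h_{\vec{e}}(n) = max{ h¹(O(\vec{e})(m)) : h⁰(O(\vec{e})(m)) ≥ n }. Then Γ(\vec{e}) is a k-core, i.e. no box of Γ(\vec{e}) has hook length equal to k. -/
/-- The hook length of a box `c = (r, col)` of a Young diagram. -/
def hookLength (Y : YoungDiagram) (c : ℕ × ℕ) : ℕ :=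
  (Y.rowLen c.1 - c.2) + (Y.colLen c.2 - c.1) - 1

private def Haux0 {k : ℕ} (e : Fin k → ℤ) (m : ℤ) : ℤ := ∑ ℓ : Fin k, max 0 (e ℓ + m + 1)
private def Haux1 {k : ℕ} (e : Fin k → ℤ) (m : ℤ) : ℤ := ∑ ℓ : Fin k, max 0 (-(e ℓ) - m - 1)

private lemma Haux0_mono {k : ℕ} (e : Fin k → ℤ) {m m' : ℤ} (hmm : m ≤ m') :
    Haux0 e m ≤ Haux0 e m' :=
  Finset.sum_le_sum fun ℓ _ => by omega

private lemma Haux1_anti {k : ℕ} (e : Fin k → ℤ) {m m' : ℤ} (hmm : m ≤ m') :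
    Haux1 e m' ≤ Haux1 e m :=
  Finset.sum_le_sum fun ℓ _ => by omega

private lemma Haux_step {k : ℕ} (e : Fin k → ℤ) (m : ℤ) :
    (Haux0 e (m+1) - Haux0 e m) + (Haux1 e m - Haux1 e (m+1)) = (k : ℤ) := by
  unfold Haux0 Haux1
  rw [← Finset.sum_sub_distrib, ← Finset.sum_sub_distrib, ← Finset.sum_add_distrib]
  have : ∀ ℓ : Fin k, (max 0 (e ℓ + (m+1) + 1) - max 0 (e ℓ + m + 1)) +
      (max 0 (-(e ℓ) - m - 1) - max 0 (-(e ℓ) - (m+1) - 1)) = 1 := fun ℓ => by omega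
  rw [Finset.sum_congr rfl fun ℓ _ => this ℓ]
  simp

private lemma Haux0_convex {k : ℕ} (e : Fin k → ℤ) (m : ℤ) :
    Haux0 e m + Haux0 e m ≤ Haux0 e (m-1) + Haux0 e (m+1) := by
  unfold Haux0
  rw [← Finset.sum_add_distrib, ← Finset.sum_add_distrib]
  exact Finset.sum_le_sum fun ℓ _ => by omega

/-- the `k`-staircase `Γ(e)`, the Young diagram whose `n`-th column has
`h_e(n) = max { h¹(O(e)(m)) : h⁰(O(e)(m)) ≥ n }` boxes, is a `k`-core: no box has hook
length equal to `k`. -/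
theorem kstaircase_is_kcore
    (k : ℕ) (hk : 1 ≤ k) (e : Fin k → ℤ) (he : Monotone e)
    (h : ℕ → ℤ)
    (hh : ∀ n : ℕ, 1 ≤ n →
      IsGreatest {v : ℤ | ∃ m : ℤ,
        (n : ℤ) ≤ ∑ ℓ : Fin k, max 0 (e ℓ + m + 1) ∧
        v = ∑ ℓ : Fin k, max 0 (-(e ℓ) - m - 1)} (h n))
    (Γ : YoungDiagram)
    (hΓ : ∀ r c : ℕ, (r, c) ∈ Γ ↔ (r : ℤ) < h (c + 1)) :
    ∀ c ∈ Γ.cells, hookLength Γ c ≠ k := by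
  classical
  have hh' : ∀ n : ℕ, 1 ≤ n →
      IsGreatest {v : ℤ | ∃ m : ℤ, (n : ℤ) ≤ Haux0 e m ∧ v = Haux1 e m} (h n) := hh
  -- the key "abacus closure" property of the bead set {h n - n : n ≥ 1}
  have key : ∀ n : ℕ, 1 ≤ n → ∃ n' : ℕ, 1 ≤ n' ∧
      h n' - (n' : ℤ) = h n - (n : ℤ) - (k : ℤ) := by
    intro n hn
    obtain ⟨⟨m₀, hm₀n, hm₀v⟩, hub⟩ := hh' n hn
    -- the least m with n ≤ Haux0 e m
    have hbdd : ∃ b : ℤ, ∀ z : ℤ, ((n : ℤ) ≤ Haux0 e z) → b ≤ z := by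
      refine ⟨-(e ⟨k-1, by omega⟩), fun z hz => ?_⟩
      by_contra hcon
      push_neg at hcon
      have hzero : Haux0 e z = 0 := by
        apply Finset.sum_eq_zero
        intro ℓ _
        have hle : e ℓ ≤ e ⟨k-1, by omega⟩ := he (by
          show ℓ.1 ≤ k - 1
          omega)
        omega
      rw [hzero] at hz
      omega
    obtain ⟨m, hmn, hmmin⟩ := Int.exists_least_of_bdd hbdd ⟨m₀, hm₀n⟩
    have h1m_le : Haux1 e m ≤ h n := hub ⟨m, hmn, rfl⟩
    have hhn : h n = Haux1 e m := by
      refine le_antisymm ?_ h1m_le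
      rw [hm₀v]
      exact Haux1_anti e (hmmin m₀ hm₀n)
    have hlt : Haux0 e (m-1) < (n : ℤ) := by
      by_contra hcon
      push_neg at hcon
      have := hmmin (m-1) hcon
      omega
    have hδ0 : 0 ≤ Haux0 e (m+1) - Haux0 e m := by
      have := Haux0_mono e (show m ≤ m+1 by omega)
      omega
    refine ⟨n + (Haux0 e (m+1) - Haux0 e m).toNat, by omega, ?_⟩
    set n' : ℕ := n + (Haux0 e (m+1) - Haux0 e m).toNat with hn'def
    have hn' : (n' : ℤ) = (n : ℤ) + (Haux0 e (m+1) - Haux0 e m) := by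
      rw [hn'def]
      push_cast [Int.toNat_of_nonneg hδ0]
      ring
    have h1 : (n' : ℤ) ≤ Haux0 e (m+1) := by rw [hn']; omega
    have h2 : Haux0 e m < (n' : ℤ) := by
      have := Haux0_convex e m
      rw [hn']; omega
    obtain ⟨⟨m₁, hm₁n, hm₁v⟩, hub1⟩ := hh' n' (by omega)
    have hle1 : Haux1 e (m+1) ≤ h n' := hub1 ⟨m+1, h1, rfl⟩
    have hhn' : h n' = Haux1 e (m+1) := by
      refine le_antisymm ?_ hle1
      rw [hm₁v]
      refine Haux1_anti e ?_
      by_contra hcon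
      push_neg at hcon
      have := Haux0_mono e (show m₁ ≤ m by omega)
      omega
    have hs := Haux_step e m
    rw [hhn, hhn', hn']
    omega
  -- geometric part
  rintro ⟨r, col⟩ hc hkk
  have hmem : (r, col) ∈ Γ := (YoungDiagram.mem_cells _).mp hc
  have hcltR : col < Γ.rowLen r := YoungDiagram.mem_iff_lt_rowLen.mp hmem
  have hrltL : r < Γ.colLen col := YoungDiagram.mem_iff_lt_colLen.mp hmem
  set R : ℕ := Γ.rowLen r with hR
  set L : ℕ := Γ.colLen col with hLdef
  -- colLen col = h (col+1)
  have hcol : ∀ i : ℕ, i < L ↔ (i : ℤ) < h (col + 1) := fun i =>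
    Iff.trans (Iff.symm YoungDiagram.mem_iff_lt_colLen) (hΓ i col)
  have hL : (L : ℤ) = h (col + 1) := by
    have h1 : ¬ ((L : ℤ) < h (col + 1)) := fun hc => by
      have := (hcol L).mpr hc; omega
    have h2 : ((L - 1 : ℕ) : ℤ) < h (col + 1) := (hcol (L-1)).mp (by omega)
    push_cast [show (1:ℕ) ≤ L by omega] at h2
    omega
  -- hook length identity in ℤ
  have hkZ : (R : ℤ) + (L : ℤ) - (col : ℤ) - (r : ℤ) - 1 = (k : ℤ) := by
    have : (R - col) + (L - r) - 1 = k := hkk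
    omega
  obtain ⟨n', hn'1, hn'eq⟩ := key (col + 1) (by omega)
  -- h n' = n' + r - R
  have hhn' : h n' = (n' : ℤ) + (r : ℤ) - (R : ℤ) := by
    push_cast at hn'eq
    omega
  have hrowmem : ∀ j : ℕ, (r, j) ∈ Γ ↔ j < R := fun j => YoungDiagram.mem_iff_lt_rowLen
  -- the bead h n' - n' = r - R is impossible
  rcases Nat.lt_or_ge (n' - 1) R with hcase | hcase
  · -- (r, n'-1) ∈ Γ, so r < h n', contradiction
    have hmem' : (r, n' - 1) ∈ Γ := (hrowmem (n'-1)).mpr hcase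
    have := (hΓ r (n'-1)).mp hmem'
    rw [show n' - 1 + 1 = n' by omega, hhn'] at this
    omega
  · have hmem' : (r, n' - 1) ∉ Γ := fun hmm => by
      have := (hrowmem (n'-1)).mp hmm; omega
    have := (hΓ r (n'-1)).not.mp hmem'
    rw [show n' - 1 + 1 = n' by omega, hhn'] at this
    push_neg at this
    omega
end

section
/- Let e_1 ≤ ⋯ ≤ e_k be integers and Γ(\vec{e}) the associated k-staircase Young diagram (n-th column has h_{\vec{e}}(n) boxes). Then the number of boxes of Γ(\vec{e}) with hook length strictly less than k equals u(\vec{e}) = ∑_{e_i < e_j} (e_j − e_i − 1). -/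
/-!
The cells of a Young diagram correspond to the pairs (bead `x`, gap `z`) with `z < x` of its
Maya diagram, the hook length of the cell being `x - z`. The diagram `Γ(e)` is the one of the
`k`-abacus whose runner `j` carries exactly the beads `≤ T j = ∑ e - k (e j + 1) + j + 1`: the
path `y ↦ (#gaps ≤ y, #beads > y)` of this abacus turns only at the points `(A m, B m)` formed by
the two sums in `hh`, so `h` traces its boundary. On such a `k`-core, the pairs with
`0 < x - z < k`, `x` on runner `i` and `z` on runner `j`, number `max 0 ⌊(T i - T j) / k⌋`, which
is `max 0 (e j - e i - [i < j])`; summing over `i, j` gives `u(e)`.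
-/

open Finset Function

namespace YoungDiagram

variable (Y : YoungDiagram)

def rowBead (r : ℕ) : ℤ := Y.rowLen r - r

def colGap (c : ℕ) : ℤ := c + 1 - Y.colLen c

theorem mem_iff_colGap_lt_rowBead (r c : ℕ) : (r, c) ∈ Y ↔ Y.colGap c < Y.rowBead r := by
  rw [rowBead, colGap]
  constructor
  · intro h
    have := mem_iff_lt_rowLen.1 h
    have := mem_iff_lt_colLen.1 h
    omega
  · intro h
    by_contra hc
    have := mt mem_iff_lt_rowLen.2 hc
    have := mt mem_iff_lt_colLen.2 hc
    omega

theorem hookLength_eq {r c : ℕ} (h : (r, c) ∈ Y) :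
    (hookLength Y (r, c) : ℤ) = Y.rowBead r - Y.colGap c := by
  have := mem_iff_lt_rowLen.1 h
  have := mem_iff_lt_colLen.1 h
  simp only [hookLength, rowBead, colGap]
  omega

end YoungDiagram

theorem Monotone.eq_of_apply_sub_one_lt {G : ℤ → ℤ} (hG : Monotone G) {a b : ℤ}
    (hab : G (a - 1) < G b) (hba : G (b - 1) < G a) : a = b := by
  by_contra hne
  rcases Ne.lt_or_gt hne with h | h
  · exact (hG (Int.le_sub_one_of_lt h)).not_gt hba
  · exact (hG (Int.le_sub_one_of_lt h)).not_gt hab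

def IsBeadCount (D : Set ℤ) (N : ℤ → ℤ) : Prop := ∀ y, N (y - 1) = N y + D.indicator 1 y

namespace IsBeadCount

variable {D : Set ℤ} {N : ℤ → ℤ}

theorem sub_one_of_mem (h : IsBeadCount D N) {y : ℤ} (hy : y ∈ D) : N (y - 1) = N y + 1 := by
  simpa only [hy, Set.indicator_of_mem, Pi.one_apply] using h y

theorem sub_one_of_not_mem (h : IsBeadCount D N) {y : ℤ} (hy : y ∉ D) : N (y - 1) = N y := by
  simpa only [hy, not_false_eq_true, Set.indicator_of_notMem, add_zero] using h y

theorem sub_one_mem_Icc (h : IsBeadCount D N) (y : ℤ) :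
    N (y - 1) ∈ Set.Icc (N y) (N y + 1) := by
  by_cases hy : y ∈ D
  · simp [h.sub_one_of_mem hy]
  · simp [h.sub_one_of_not_mem hy]

protected theorem antitone (h : IsBeadCount D N) : Antitone N :=
  antitone_int_of_succ_le fun y => by
    simpa using (h.sub_one_mem_Icc (y + 1)).1

theorem monotone_add (h : IsBeadCount D N) : Monotone fun y => N y + y :=
  monotone_int_of_le_succ fun y => by
    have := (h.sub_one_mem_Icc (y + 1)).2
    rw [add_sub_cancel_right] at this
    linarith

end IsBeadCount

def beadGapPairs (D : Set ℤ) (k : ℕ) : Set (ℤ × ℤ) :=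
  {p | p.1 ∈ D ∧ p.2 ∉ D ∧ 0 < p.1 - p.2 ∧ p.1 - p.2 < k}

/-- `N y` counts the beads of `D` at positions `> y`, so that `N y + y` counts its gaps at
positions `≤ y`; the rows and columns of `Y` end at these beads and gaps. -/
structure IsMayaDiagram (Y : YoungDiagram) (D : Set ℤ) (N : ℤ → ℤ) : Prop where
  isBeadCount : IsBeadCount D N
  count_nonneg : ∀ y, 0 ≤ N y
  neg_le_count : ∀ y, -y ≤ N y
  mem_iff : ∀ r c : ℕ, (r, c) ∈ Y ↔ (r : ℤ) < N (c - r)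

namespace IsMayaDiagram

variable {Y : YoungDiagram} {D : Set ℤ} {N : ℤ → ℤ}

theorem count_rowBead (h : IsMayaDiagram Y D N) (r : ℕ) :
    N (Y.rowBead r) = r ∧ N (Y.rowBead r - 1) = r + 1 := by
  have hle : N (Y.rowBead r) ≤ r :=
    not_lt.1 fun hlt => lt_irrefl (Y.rowLen r)
      (YoungDiagram.mem_iff_lt_rowLen.1 ((h.mem_iff r (Y.rowLen r)).2 hlt))
  have hlt : (r : ℤ) < N (Y.rowBead r - 1) := by
    rcases Nat.eq_zero_or_pos (Y.rowLen r) with h0 | hpos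
    · have := h.neg_le_count (Y.rowBead r - 1)
      simp only [YoungDiagram.rowBead, h0] at this ⊢
      omega
    · have := (h.mem_iff r (Y.rowLen r - 1)).1 (YoungDiagram.mem_iff_lt_rowLen.2 (by omega))
      rwa [Nat.cast_sub hpos, Nat.cast_one, sub_right_comm] at this
  have := (h.isBeadCount.sub_one_mem_Icc (Y.rowBead r)).2
  omega

theorem rowBead_mem (h : IsMayaDiagram Y D N) (r : ℕ) : Y.rowBead r ∈ D := by
  by_contra hr
  have := h.isBeadCount.sub_one_of_not_mem hr
  have := h.count_rowBead r
  omega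

theorem rowBead_count (h : IsMayaDiagram Y D N) {x : ℤ} (hx : x ∈ D) :
    Y.rowBead (N x).toNat = x := by
  have hr : ((N x).toNat : ℤ) = N x := Int.toNat_of_nonneg (h.count_nonneg x)
  have := h.count_rowBead (N x).toNat
  have := h.isBeadCount.sub_one_of_mem hx
  exact h.isBeadCount.antitone.neg.eq_of_apply_sub_one_lt (by omega) (by omega)

theorem count_colGap (h : IsMayaDiagram Y D N) (c : ℕ) :
    N (Y.colGap c - 1) = Y.colLen c ∧ N (Y.colGap c) = Y.colLen c := by
  have hg : Y.colGap c = c + 1 - Y.colLen c := rfl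
  have hle : N (Y.colGap c - 1) ≤ Y.colLen c := by
    have := mt (h.mem_iff (Y.colLen c) c).2
      fun hc => lt_irrefl _ (YoungDiagram.mem_iff_lt_colLen.1 hc)
    rw [show (c : ℤ) - Y.colLen c = Y.colGap c - 1 by omega] at this
    omega
  have hge : (Y.colLen c : ℤ) ≤ N (Y.colGap c) := by
    rcases Nat.eq_zero_or_pos (Y.colLen c) with h0 | hpos
    · rw [h0, Nat.cast_zero]
      exact h.count_nonneg _
    · have := (h.mem_iff (Y.colLen c - 1) c).1 (YoungDiagram.mem_iff_lt_colLen.2 (by omega))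
      rw [show (c : ℤ) - ((Y.colLen c - 1 : ℕ) : ℤ) = Y.colGap c by omega] at this
      omega
  have := h.isBeadCount.antitone (sub_one_lt (Y.colGap c)).le
  omega

theorem colGap_not_mem (h : IsMayaDiagram Y D N) (c : ℕ) : Y.colGap c ∉ D := fun hc => by
  have := h.isBeadCount.sub_one_of_mem hc
  have := h.count_colGap c
  omega

theorem colGap_count (h : IsMayaDiagram Y D N) {z : ℤ} (hz : z ∉ D) :
    Y.colGap (N (z - 1) + z - 1).toNat = z := by
  have hc : ((N (z - 1) + z - 1).toNat : ℤ) = N (z - 1) + z - 1 :=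
    Int.toNat_of_nonneg (by linarith [h.neg_le_count (z - 1)])
  have := h.count_colGap (N (z - 1) + z - 1).toNat
  have : Y.colGap (N (z - 1) + z - 1).toNat
      = (N (z - 1) + z - 1).toNat + 1 - Y.colLen (N (z - 1) + z - 1).toNat := rfl
  have := h.isBeadCount.sub_one_of_not_mem hz
  exact h.isBeadCount.monotone_add.eq_of_apply_sub_one_lt (by omega) (by omega)

theorem card_filter_hookLength_lt (h : IsMayaDiagram Y D N) (k : ℕ) :
    (Y.cells.filter fun c => hookLength Y c < k).card = (beadGapPairs D k).ncard := by
  rw [← Set.ncard_coe_finset]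
  refine Set.ncard_congr (fun c _ => (Y.rowBead c.1, Y.colGap c.2)) ?_ ?_ ?_
  · rintro ⟨r, c⟩ hrc
    simp only [coe_filter, YoungDiagram.mem_cells, Set.mem_ofPred_eq] at hrc ⊢
    obtain ⟨hrc, hk⟩ := hrc
    have := Y.hookLength_eq hrc
    exact ⟨h.rowBead_mem r, h.colGap_not_mem c,
      sub_pos.2 ((Y.mem_iff_colGap_lt_rowBead r c).1 hrc), by omega⟩
  · rintro ⟨r, c⟩ ⟨r', c'⟩ - - hrc
    simp only [Prod.mk.injEq] at hrc ⊢
    have := h.count_rowBead r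
    have := h.count_rowBead r'
    have := h.count_colGap c
    have := h.count_colGap c'
    have : Y.colGap c = c + 1 - Y.colLen c := rfl
    have : Y.colGap c' = c' + 1 - Y.colLen c' := rfl
    rw [hrc.1, hrc.2] at *
    omega
  · rintro ⟨x, z⟩ ⟨hx, hz, hpos, hlt⟩
    have hrc : ((N x).toNat, (N (z - 1) + z - 1).toNat) ∈ Y := by
      rw [Y.mem_iff_colGap_lt_rowBead, h.rowBead_count hx, h.colGap_count hz]
      exact sub_pos.1 hpos
    have := Y.hookLength_eq hrc
    rw [h.rowBead_count hx, h.colGap_count hz] at this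
    refine ⟨((N x).toNat, (N (z - 1) + z - 1).toNat), ?_,
      Prod.ext (h.rowBead_count hx) (h.colGap_count hz)⟩
    simp only [coe_filter, YoungDiagram.mem_cells, Set.mem_ofPred_eq]
    exact ⟨hrc, by omega⟩

end IsMayaDiagram

section Abacus

variable {k : ℕ}

def runner (k : ℕ) (t : ℤ) : Set ℤ := {x | x ≤ t ∧ (k : ℤ) ∣ t - x}

def abacus (T : Fin k → ℤ) : Set ℤ := ⋃ j, runner k (T j)

/-- The number of beads `t, t - k, t - 2k, …` at positions `> y`. -/
def beadsAbove (k : ℕ) (t y : ℤ) : ℤ := max 0 ((t - y + k - 1) / k)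

def abacusCount (T : Fin k → ℤ) (y : ℤ) : ℤ := ∑ j, beadsAbove k (T j) y

theorem beadsAbove_sub_one [NeZero k] (t y : ℤ) :
    beadsAbove k t (y - 1) = beadsAbove k t y + (runner k t).indicator 1 y := by
  have hk : (0 : ℤ) < k := by exact_mod_cast NeZero.pos k
  set q := (t - y) / k
  set r := (t - y) % k
  have hr0 : 0 ≤ r := Int.emod_nonneg _ hk.ne'
  have hrk : r < k := Int.emod_lt_of_pos _ hk
  have hqr : r + k * q = t - y := Int.emod_add_mul_ediv _ _
  have h1 : (t - (y - 1) + k - 1) / k = q + 1 :=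
    ((Int.ediv_emod_unique hk).2 ⟨by linarith, hr0, hrk⟩).1
  have hmem : y ∈ runner k t ↔ r = 0 ∧ 0 ≤ q := by
    rw [runner, Set.mem_ofPred_eq, Int.dvd_iff_emod_eq_zero]
    constructor
    · rintro ⟨hyt, hr⟩
      exact ⟨hr, by nlinarith⟩
    · rintro ⟨hr, hq⟩
      exact ⟨by nlinarith, hr⟩
  by_cases hr : r = 0
  · have h2 : (t - y + k - 1) / k = q :=
      ((Int.ediv_emod_unique (r := k - 1) hk).2 ⟨by linarith, by omega, by omega⟩).1
    by_cases hq : 0 ≤ q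
    · rw [beadsAbove, beadsAbove, h1, h2, Set.indicator_of_mem (hmem.2 ⟨hr, hq⟩), Pi.one_apply]
      omega
    · rw [beadsAbove, beadsAbove, h1, h2,
        Set.indicator_of_notMem (mt hmem.1 fun h => hq h.2)]
      omega
  · have h2 : (t - y + k - 1) / k = q + 1 :=
      ((Int.ediv_emod_unique (r := r - 1) hk).2 ⟨by linarith, by omega, by omega⟩).1
    rw [beadsAbove, beadsAbove, h1, h2, Set.indicator_of_notMem (mt hmem.1 fun h => hr h.1),
      add_zero]

variable {T : Fin k → ℤ}

theorem eq_of_dvd_sub (hT : Injective fun j => (T j : ZMod k)) {a b : Fin k}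
    (h : (k : ℤ) ∣ T a - T b) : a = b :=
  hT ((ZMod.intCast_eq_intCast_iff_dvd_sub _ _ _).2 (dvd_sub_comm.1 h))

theorem exists_dvd_sub [NeZero k] (hT : Injective fun j => (T j : ZMod k)) (z : ℤ) :
    ∃ j, (k : ℤ) ∣ z - T j := by
  obtain ⟨j, hj⟩ :=
    ((Fintype.bijective_iff_injective_and_card _).2 ⟨hT, by simp⟩).2 (z : ZMod k)
  exact ⟨j, (ZMod.intCast_eq_intCast_iff_dvd_sub _ _ _).1 hj⟩

theorem isBeadCount_abacusCount [NeZero k] (hT : Injective fun j => (T j : ZMod k)) :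
    IsBeadCount (abacus T) (abacusCount T) := fun y => by
  have hdisj : ((univ : Finset (Fin k)) : Set (Fin k)).PairwiseDisjoint fun j => runner k (T j) :=
    fun a _ b _ hab => Set.disjoint_left.2 fun x hxa hxb =>
      hab (eq_of_dvd_sub hT (by simpa using dvd_sub hxa.2 hxb.2))
  simp only [abacusCount, beadsAbove_sub_one, sum_add_distrib, abacus]
  rw [← Finset.indicator_biUnion_apply _ _ hdisj]
  simp

theorem not_mem_abacus_iff [NeZero k] (hT : Injective fun j => (T j : ZMod k)) {z : ℤ} :
    z ∉ abacus T ↔ ∃ j, T j < z ∧ (k : ℤ) ∣ z - T j := by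
  simp only [abacus, runner, Set.mem_iUnion, Set.mem_ofPred_eq, not_exists, not_and]
  constructor
  · intro h
    obtain ⟨j, hj⟩ := exists_dvd_sub hT z
    exact ⟨j, not_le.1 fun hzj => h j hzj (dvd_sub_comm.1 hj), hj⟩
  · rintro ⟨j, hjz, hj⟩ i hzi hi
    rw [eq_of_dvd_sub hT (a := i) (b := j) (by simpa using dvd_add hi hj)] at hzi
    omega

/-- The bead `s` steps below the top of runner `i`, together with the gap of runner `j` lying
less than `k` below it. -/
def abacusPair (T : Fin k → ℤ) (a : Σ _ : Fin k × Fin k, ℕ) : ℤ × ℤ :=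
  (T a.1.1 - k * a.2, T a.1.2 + k * ((T a.1.1 - T a.1.2) / k - a.2))

theorem abacusPair_injective [NeZero k] (hT : Injective fun j => (T j : ZMod k)) :
    Injective (abacusPair T) := by
  rintro ⟨⟨i, j⟩, s⟩ ⟨⟨i', j'⟩, s'⟩ h
  simp only [abacusPair, Prod.mk.injEq] at h
  obtain ⟨h1, h2⟩ := h
  obtain rfl := eq_of_dvd_sub hT (a := i) (b := i') ⟨s - s', by linear_combination h1⟩
  obtain rfl : s = s' := by
    have hk : (k : ℤ) ≠ 0 := by exact_mod_cast NeZero.ne k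
    exact_mod_cast mul_left_cancel₀ hk (by linarith : (k : ℤ) * s = k * s')
  obtain rfl := eq_of_dvd_sub hT (a := j) (b := j')
    ⟨(T i - T j') / k - (T i - T j) / k, by linear_combination h2⟩
  rfl

theorem abacusPair_mem [NeZero k] (hT : Injective fun j => (T j : ZMod k)) {i j : Fin k}
    {s : ℕ} (hs : (s : ℤ) < (T i - T j) / k) :
    abacusPair T ⟨(i, j), s⟩ ∈ beadGapPairs (abacus T) k := by
  have hk : (0 : ℤ) < k := by exact_mod_cast NeZero.pos k
  have hdm : (T i - T j) % k + k * ((T i - T j) / k) = T i - T j := Int.emod_add_mul_ediv _ _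
  have hρ0 : 0 ≤ (T i - T j) % k := Int.emod_nonneg _ hk.ne'
  have hρk : (T i - T j) % k < k := Int.emod_lt_of_pos _ hk
  have hρ : (T i - T j) % k ≠ 0 := fun h0 => by
    obtain rfl := eq_of_dvd_sub hT (Int.dvd_of_emod_eq_zero h0)
    simp only [sub_self, Int.zero_ediv] at hs
    omega
  have hks : (0 : ℤ) ≤ k * s := by positivity
  have hkM : 0 < (k : ℤ) * ((T i - T j) / k - s) := mul_pos hk (by linarith)
  have hxz : T i - k * s - (T j + k * ((T i - T j) / k - s)) = (T i - T j) % k := by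
    linear_combination -hdm
  simp only [abacusPair, beadGapPairs, Set.mem_ofPred_eq]
  refine ⟨Set.mem_iUnion.2 ⟨i, by linarith, ⟨s, by ring⟩⟩, (not_mem_abacus_iff hT).2
    ⟨j, by linarith, ⟨(T i - T j) / k - s, by ring⟩⟩, ?_, ?_⟩ <;>
  · simp only [hxz]
    omega

theorem exists_abacusPair_eq [NeZero k] (hT : Injective fun j => (T j : ZMod k)) {p : ℤ × ℤ}
    (hp : p ∈ beadGapPairs (abacus T) k) :
    ∃ (i j : Fin k) (s : ℕ), (s : ℤ) < (T i - T j) / k ∧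
      abacusPair T ⟨(i, j), s⟩ = p := by
  have hk : (0 : ℤ) < k := by exact_mod_cast NeZero.pos k
  obtain ⟨x, z⟩ := p
  obtain ⟨hx, hz, hpos, hlt⟩ := hp
  obtain ⟨i, hxi, s, hs⟩ := Set.mem_iUnion.1 hx
  obtain ⟨j, hjz, q, hq⟩ := (not_mem_abacus_iff hT).1 hz
  have hs0 : 0 ≤ s := (mul_nonneg_iff_of_pos_left hk).1 (by linarith)
  have hq0 : 0 < q := (mul_pos_iff_of_pos_left hk).1 (by linarith)
  have hM : (T i - T j) / k = s + q :=
    ((Int.ediv_emod_unique (r := x - z) hk).2 ⟨by linarith, hpos.le, hlt⟩).1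
  refine ⟨i, j, s.toNat, by omega, ?_⟩
  simp only [abacusPair, hM, Int.toNat_of_nonneg hs0, Prod.mk.injEq]
  constructor <;> linarith

theorem ncard_beadGapPairs_abacus [NeZero k] (hT : Injective fun j => (T j : ZMod k)) :
    (beadGapPairs (abacus T) k).ncard = ∑ p : Fin k × Fin k, ((T p.1 - T p.2) / k).toNat := by
  have hS : abacusPair T '' (univ.sigma fun p => range ((T p.1 - T p.2) / k).toNat :
      Finset (Σ _ : Fin k × Fin k, ℕ)) = beadGapPairs (abacus T) k := by
    ext p
    simp only [Set.mem_image, coe_sigma, Set.mem_sigma_iff, coe_univ, Set.mem_univ, coe_range,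
      Set.mem_Iio, true_and, Sigma.exists, Prod.exists]
    constructor
    · rintro ⟨i, j, s, hs, rfl⟩
      exact abacusPair_mem hT (by omega)
    · intro hp
      obtain ⟨i, j, s, hs, rfl⟩ := exists_abacusPair_eq hT hp
      exact ⟨i, j, s, by omega, rfl⟩
  rw [← hS, Set.ncard_image_of_injective _ (abacusPair_injective hT), Set.ncard_coe_finset,
    card_sigma]
  simp

end Abacus

section Staircase

variable {k : ℕ} (e : Fin k → ℤ)

def staircaseTop (j : Fin k) : ℤ := ∑ i, e i - k * (e j + 1) + (j + 1)

def staircaseCorner (m : ℤ) : ℤ := ∑ j, e j + k * (m + 1)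

theorem staircaseTop_injective [NeZero k] : Injective fun j => (staircaseTop e j : ZMod k) := by
  intro a b hab
  simp only [staircaseTop, Int.cast_add, Int.cast_sub, Int.cast_mul, Int.cast_natCast,
    ZMod.natCast_self, zero_mul, sub_zero, Int.cast_one, add_right_inj, add_left_inj] at hab
  have := congrArg ZMod.val hab
  rwa [ZMod.val_natCast, ZMod.val_natCast, Nat.mod_eq_of_lt a.2, Nat.mod_eq_of_lt b.2,
    ← Fin.ext_iff] at this

theorem abacusCount_staircaseCorner_add [NeZero k] (m : ℤ) {i : ℕ} (hi : i ≤ k) :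
    abacusCount (staircaseTop e) (staircaseCorner e m + i)
      = ∑ j, max 0 (-e j - m - 1 - if (j : ℕ) < i then 1 else 0) := by
  have hk : (0 : ℤ) < k := by exact_mod_cast NeZero.pos k
  refine sum_congr rfl fun j _ => congrArg (max 0) ?_
  have hj := j.2
  split_ifs with hji
  · exact ((Int.ediv_emod_unique (r := j + k - i) hk).2
      ⟨by simp only [staircaseTop, staircaseCorner]; ring, by omega, by omega⟩).1
  · exact ((Int.ediv_emod_unique (r := j - i) hk).2
      ⟨by simp only [staircaseTop, staircaseCorner]; ring, by omega, by omega⟩).1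

theorem abacusCount_staircaseCorner [NeZero k] (m : ℤ) :
    abacusCount (staircaseTop e) (staircaseCorner e m) = ∑ j, max 0 (-e j - m - 1) := by
  simpa using abacusCount_staircaseCorner_add e m (Nat.zero_le k)

theorem sum_max_neg_add_staircaseCorner (m : ℤ) :
    ∑ j, max 0 (-e j - m - 1) + staircaseCorner e m = ∑ j, max 0 (e j + m + 1) := by
  have h : ∀ j, max 0 (e j + m + 1) = max 0 (-e j - m - 1) + (e j + m + 1) := fun j => by omega
  simp only [staircaseCorner, sum_congr rfl fun j _ => h j, sum_add_distrib, sum_const, card_univ,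
    Fintype.card_fin, nsmul_eq_mul]
  ring

theorem exists_eq_staircaseCorner_add [NeZero k] (y : ℤ) :
    ∃ (m : ℤ) (i : ℕ), i < k ∧ y = staircaseCorner e m + i := by
  have hk : (0 : ℤ) < k := by exact_mod_cast NeZero.pos k
  have := Int.emod_lt_of_pos (y - ∑ j, e j) hk
  have := Int.emod_nonneg (y - ∑ j, e j) hk.ne'
  have := Int.emod_add_mul_ediv (y - ∑ j, e j) k
  refine ⟨(y - ∑ j, e j) / k - 1, ((y - ∑ j, e j) % k).toNat, by omega, ?_⟩
  rw [staircaseCorner, Int.toNat_of_nonneg (by assumption)]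
  linarith

/-- Every point `(N y + y, N y)` of the boundary path of the abacus is dominated by a corner
`(A m, B m)`: since `e` is monotone, the beads strictly between two consecutive corners form an
initial segment. -/
theorem exists_abacusCount_le_sums [NeZero k] (he : Monotone e) (y : ℤ) :
    ∃ m, abacusCount (staircaseTop e) y ≤ ∑ j, max 0 (-e j - m - 1) ∧
      abacusCount (staircaseTop e) y + y ≤ ∑ j, max 0 (e j + m + 1) := by
  obtain ⟨m, i, hik, rfl⟩ := exists_eq_staircaseCorner_add e y
  rw [abacusCount_staircaseCorner_add e m hik.le]
  by_cases hfull : ∀ j : Fin k, (j : ℕ) < i → e j ≤ -m - 2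
  · refine ⟨m, ?_⟩
    have hcount : ∑ j : Fin k, (if (j : ℕ) < i then (1 : ℤ) else 0) = i := by
      rw [sum_boole, Fin.card_filter_val_lt, min_eq_right hik.le]
    have hle : ∑ j, max 0 (-e j - m - 1 - if (j : ℕ) < i then 1 else 0)
        = ∑ j, max 0 (-e j - m - 1) - i := by
      rw [← hcount, ← sum_sub_distrib]
      refine sum_congr rfl fun j _ => ?_
      have := hfull j
      split_ifs <;> omega
    have := sum_max_neg_add_staircaseCorner e m
    constructor <;> linarith
  · push Not at hfull
    obtain ⟨j₀, hj₀i, hj₀⟩ := hfull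
    refine ⟨m + 1, ?_⟩
    have heq : ∑ j, max 0 (-e j - m - 1 - if (j : ℕ) < i then 1 else 0)
        = ∑ j, max 0 (-e j - (m + 1) - 1) := by
      refine sum_congr rfl fun j _ => ?_
      split_ifs with hji
      · ring_nf
      · have := he (show j₀ ≤ j from Fin.le_def.2 (by omega))
        omega
    have := sum_max_neg_add_staircaseCorner e (m + 1)
    have : staircaseCorner e m + i ≤ staircaseCorner e (m + 1) := by
      have : (i : ℤ) < k := by exact_mod_cast hik
      simp only [staircaseCorner]
      linarith
    exact ⟨heq.le, by linarith⟩

theorem neg_le_abacusCount_staircaseTop [NeZero k] (y : ℤ) :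
    -y ≤ abacusCount (staircaseTop e) y := by
  obtain ⟨m, i, -, rfl⟩ := exists_eq_staircaseCorner_add e y
  have := (isBeadCount_abacusCount (staircaseTop_injective e)).monotone_add
    (le_add_of_nonneg_right (Nat.cast_nonneg i) : staircaseCorner e m ≤ _)
  simp only [abacusCount_staircaseCorner] at this
  have := sum_max_neg_add_staircaseCorner e m
  have : 0 ≤ ∑ j, max 0 (e j + m + 1) := sum_nonneg fun _ _ => le_max_left _ _
  linarith

theorem exists_le_sums_iff [NeZero k] (he : Monotone e) (a b : ℤ) :
    (∃ m, a ≤ ∑ j, max 0 (e j + m + 1) ∧ b ≤ ∑ j, max 0 (-e j - m - 1)) ↔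
      b ≤ abacusCount (staircaseTop e) (a - b) := by
  have hstep := isBeadCount_abacusCount (staircaseTop_injective e)
  constructor
  · rintro ⟨m, ha, hb⟩
    have := abacusCount_staircaseCorner e m
    rcases le_total (a - b) (staircaseCorner e m) with h | h
    · have := hstep.antitone h
      linarith
    · have hmono := hstep.monotone_add h
      have := sum_max_neg_add_staircaseCorner e m
      simp only at hmono
      linarith
  · intro h
    obtain ⟨m, h1, h2⟩ := exists_abacusCount_le_sums e he (a - b)
    exact ⟨m, by linarith, by linarith⟩

theorem lt_iff_lt_abacusCount_of_isGreatest [NeZero k] (he : Monotone e) {n : ℕ} {H : ℤ}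
    (hH : IsGreatest {v : ℤ | ∃ m : ℤ, (n : ℤ) ≤ ∑ j, max 0 (e j + m + 1) ∧
      v = ∑ j, max 0 (-e j - m - 1)} H) (r : ℤ) :
    r < H ↔ r < abacusCount (staircaseTop e) (n - 1 - r) := by
  have := exists_le_sums_iff e he n (r + 1)
  simp only [Int.add_one_le_iff, show (n : ℤ) - (r + 1) = n - 1 - r by ring] at this
  rw [← this, lt_isLUB_iff hH.isLUB]
  constructor
  · rintro ⟨_, ⟨m, hm, rfl⟩, hr⟩
    exact ⟨m, hm, hr⟩
  · rintro ⟨m, hm, hr⟩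
    exact ⟨_, ⟨m, hm, rfl⟩, hr⟩

theorem staircaseTop_sub_ediv [NeZero k] (i j : Fin k) :
    (staircaseTop e i - staircaseTop e j) / k = e j - e i - if i < j then 1 else 0 := by
  have hk : (0 : ℤ) < k := by exact_mod_cast NeZero.pos k
  have hi := i.2
  have hj := j.2
  split_ifs with hij
  · have := Fin.lt_def.1 hij
    exact ((Int.ediv_emod_unique (r := i - j + k) hk).2
      ⟨by simp only [staircaseTop]; ring, by omega, by omega⟩).1
  · have := Fin.le_def.1 (not_lt.1 hij)
    exact ((Int.ediv_emod_unique (r := i - j) hk).2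
      ⟨by simp only [staircaseTop]; ring, by omega, by omega⟩).1

theorem sum_toNat_staircaseTop_sub_ediv [NeZero k] (he : Monotone e) :
    ((∑ p : Fin k × Fin k, ((staircaseTop e p.1 - staircaseTop e p.2) / k).toNat : ℕ) : ℤ)
      = ∑ p ∈ univ.filter (fun p : Fin k × Fin k => e p.1 < e p.2), (e p.2 - e p.1 - 1) := by
  rw [sum_filter]
  push_cast
  refine sum_congr rfl fun ⟨i, j⟩ _ => ?_
  rw [staircaseTop_sub_ediv, Int.toNat_eq_max]
  split_ifs with hij hlt hlt
  · omega
  · omega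
  · exact absurd (he (not_lt.1 hij)) (not_le.2 hlt)
  · omega

end Staircase

/-- the number of boxes of the `k`-staircase `Γ(e)` with hook length
strictly less than `k` equals `u(e) = ∑_{e_i < e_j} (e_j − e_i − 1)`. -/
theorem kstaircase_small_hook_count_eq_u
    (k : ℕ) (hk : 1 ≤ k) (e : Fin k → ℤ) (he : Monotone e)
    (h : ℕ → ℤ)
    (hh : ∀ n : ℕ, 1 ≤ n →
      IsGreatest {v : ℤ | ∃ m : ℤ,
        (n : ℤ) ≤ ∑ ℓ : Fin k, max 0 (e ℓ + m + 1) ∧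
        v = ∑ ℓ : Fin k, max 0 (-(e ℓ) - m - 1)} (h n))
    (Γ : YoungDiagram)
    (hΓ : ∀ r c : ℕ, (r, c) ∈ Γ ↔ (r : ℤ) < h (c + 1)) :
    ((Γ.cells.filter (fun c => hookLength Γ c < k)).card : ℤ)
      = ∑ p ∈ Finset.univ.filter (fun p : Fin k × Fin k => e p.1 < e p.2),
          (e p.2 - e p.1 - 1) := by
  have : NeZero k := ⟨by omega⟩
  have hT := staircaseTop_injective e
  have hΓ' : IsMayaDiagram Γ (abacus (staircaseTop e)) (abacusCount (staircaseTop e)) :=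
    { isBeadCount := isBeadCount_abacusCount hT
      count_nonneg := fun _ => sum_nonneg fun _ _ => le_max_left _ _
      neg_le_count := neg_le_abacusCount_staircaseTop e
      mem_iff := fun r c => by
        rw [hΓ, lt_iff_lt_abacusCount_of_isGreatest e he (hh (c + 1) (by omega)),
          show ((c + 1 : ℕ) : ℤ) - 1 - r = c - r by push_cast; ring] }
  rw [hΓ'.card_filter_hookLength_lt, ncard_beadGapPairs_abacus hT,
    sum_toNat_staircaseTop_sub_ediv e he]
end

section
/- With the notation of truncations T^{≤t}(ℓ) of a reduced word for an element of the affine symmetric group (associated to an efficiently filled k-core tableau T), for any ℓ_1 > ℓ_2 the quantity ⌊(T^{≤t}(ℓ_1) − T^{≤t}(ℓ_2))/k⌋ is a non-decreasing function of t. In particular T^{≤t}(ℓ_1) > T^{≤t}(ℓ_2) whenever ℓ_1 > ℓ_2, i.e. the truncations remain sorted. -/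
/-!
Let `d = T(ℓ₁) - T(ℓ₂)`. If the truncation is sorted, the two moved entries satisfy `lm < lp`
(the corner condition puts `T(lm)` below `T(lp)`), so a step never lowers the larger entry of
the pair and raises the smaller one at the same time: `d` drops by at most `1`. Since `d` is
never divisible by `k` (distinct residues), dropping by `1` does not change `⌊d / k⌋`. Hence
`⌊d / k⌋` is non-decreasing; it starts at `≥ 0`, so `d ≥ 0` throughout, and `d ≠ 0` gives
sortedness again, which feeds the induction.
-/

theorem Int.fdiv_le_fdiv_of_sub_one_le {k d d' : ℤ} (hk : 0 < k) (hd : ¬ k ∣ d) (h : d - 1 ≤ d') :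
    d.fdiv k ≤ d'.fdiv k := by
  rw [Int.fdiv_eq_ediv_of_nonneg _ hk.le, Int.fdiv_eq_ediv_of_nonneg _ hk.le]
  refine le_trans ?_ (Int.ediv_le_ediv hk h)
  rw [Int.le_ediv_iff_mul_le hk]
  have hle : d / k * k ≤ d := Int.ediv_mul_le d hk.ne'
  have hne : d / k * k ≠ d := fun heq => hd ⟨d / k, by rw [mul_comm, heq]⟩
  omega

section TruncationStep

variable {ι : Type*} [LinearOrder ι] {k : ℤ} {x y : ι → ℤ}

/-- One letter of the reduced word: `y = s_j x` with `s_j` the identity or a simple affine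
transposition; the last conjunct is the addable-corner condition (sort-0). -/
def IsTruncationStep (k : ℤ) (x y : ι → ℤ) : Prop :=
  (∀ ℓ, y ℓ = x ℓ) ∨
    ∃ lm lp, lm ≠ lp ∧ y lp = x lp + 1 ∧ y lm = x lm - 1 ∧
      (∀ ℓ, ℓ ≠ lm → ℓ ≠ lp → y ℓ = x ℓ) ∧ x lm ≤ x lp - (k - 1)

theorem IsTruncationStep.sub_sub_one_le (hk : 0 < k) (hx : StrictMono x) (hxy : IsTruncationStep k x y)
    {a b : ι} (hba : b < a) : x a - x b - 1 ≤ y a - y b := by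
  rcases hxy with hid | ⟨lm, lp, hne, hp, hm, hrest, hcorner⟩
  · rw [hid a, hid b]
    omega
  · have hlt : lm < lp := hx.lt_iff_lt.mp <| by
      have := hx.injective.ne hne
      omega
    have hup : ∀ ℓ, ℓ ≠ lm → x ℓ ≤ y ℓ := fun ℓ hℓm => by
      by_cases hℓp : ℓ = lp
      · rw [hℓp, hp]; omega
      · rw [hrest ℓ hℓm hℓp]
    have hdown : ∀ ℓ, ℓ ≠ lp → y ℓ ≤ x ℓ := fun ℓ hℓp => by
      by_cases hℓm : ℓ = lm
      · rw [hℓm, hm]; omega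
      · rw [hrest ℓ hℓm hℓp]
    have hlow : ∀ ℓ, x ℓ - 1 ≤ y ℓ := fun ℓ => by
      by_cases hℓm : ℓ = lm
      · rw [hℓm, hm]
      · linarith [hup ℓ hℓm]
    have hhigh : ∀ ℓ, y ℓ ≤ x ℓ + 1 := fun ℓ => by
      by_cases hℓp : ℓ = lp
      · rw [hℓp, hp]
      · linarith [hdown ℓ hℓp]
    by_cases ham : a = lm
    · have hbp : b ≠ lp := fun hbp => lt_asymm hba (ham ▸ hbp ▸ hlt)
      linarith [hlow a, hdown b hbp]
    · linarith [hup a ham, hhigh b]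

theorem IsTruncationStep.strictMono (hk : 0 < k) (hx : StrictMono x) (hxy : IsTruncationStep k x y)
    (hy : Function.Injective y) : StrictMono y := fun b a hba => by
  have hdrop := hxy.sub_sub_one_le hk hx hba
  have hxba := hx hba
  have hyne : y a ≠ y b := hy.ne hba.ne'
  omega

theorem IsTruncationStep.fdiv_le_fdiv (hk : 0 < k) (hx : StrictMono x) (hxy : IsTruncationStep k x y)
    {a b : ι} (hba : b < a) (hres : ¬ x b ≡ x a [ZMOD k]) :
    (x a - x b).fdiv k ≤ (y a - y b).fdiv k :=
  Int.fdiv_le_fdiv_of_sub_one_le hk (Int.modEq_iff_dvd.not.mp hres) (hxy.sub_sub_one_le hk hx hba)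

end TruncationStep

theorem truncations_floor_monotone_and_sorted_general
    (k : ℕ) (g : ℕ) (T : ℕ → Fin k → ℤ)
    (hT0 : ∀ ℓ : Fin k, T 0 ℓ = (ℓ : ℤ) + 1)
    (hdist : ∀ t : ℕ, t ≤ g → ∀ ℓ1 ℓ2 : Fin k, ℓ1 ≠ ℓ2 →
      ¬ (T t ℓ1 ≡ T t ℓ2 [ZMOD (k : ℤ)]))
    (hstep : ∀ t : ℕ, 1 ≤ t → t ≤ g →
      (∀ ℓ : Fin k, T t ℓ = T (t - 1) ℓ) ∨
      ∃ lm lp : Fin k, lm ≠ lp ∧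
        T t lp = T (t - 1) lp + 1 ∧
        T t lm = T (t - 1) lm - 1 ∧
        (∀ ℓ : Fin k, ℓ ≠ lm → ℓ ≠ lp → T t ℓ = T (t - 1) ℓ) ∧
        T (t - 1) lm ≤ T (t - 1) lp - ((k : ℤ) - 1)) :
    ∀ ℓ1 ℓ2 : Fin k, ℓ2 < ℓ1 →
      (∀ s t : ℕ, s ≤ t → t ≤ g →
        Int.fdiv (T s ℓ1 - T s ℓ2) (k : ℤ) ≤ Int.fdiv (T t ℓ1 - T t ℓ2) (k : ℤ)) ∧
      (∀ t : ℕ, t ≤ g → T t ℓ2 < T t ℓ1) := by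
  intro ℓ1 ℓ2 hlt
  have hk : (0 : ℤ) < k := by exact_mod_cast ℓ1.pos
  have hsteps : ∀ t < g, IsTruncationStep (k : ℤ) (T t) (T (t + 1)) :=
    fun t ht => hstep (t + 1) (by omega) ht
  have hinj : ∀ t ≤ g, Function.Injective (T t) := fun t ht a b hab =>
    by_contra fun hne => hdist t ht a b hne (hab ▸ Int.ModEq.refl _)
  have hsorted : ∀ t ≤ g, StrictMono (T t) := by
    intro t
    induction t with
    | zero => exact fun _ a b hab => by simpa [hT0] using hab
    | succ t ih =>
      exact fun ht => (hsteps t ht).strictMono hk (ih (by omega)) (hinj (t + 1) ht)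
  refine ⟨fun s t hst => ?_, fun t ht => hsorted t ht hlt⟩
  induction t, hst using Nat.le_induction with
  | base => exact fun _ => le_rfl
  | succ t _ ih =>
    exact fun ht => (ih (by omega)).trans <| (hsteps t ht).fdiv_le_fdiv hk
      (hsorted t (by omega)) hlt (hdist t (by omega) ℓ2 ℓ1 hlt.ne)

/-- Proposition `main_ants`: for the truncations `T^{≤t}(ℓ)` of a reduced
word in the affine symmetric group (starting from `T^{≤0}(ℓ) = ℓ`, with distinct residues
mod `k` at all times, each step being either the identity or a genuine transposition
increasing one value by 1 and decreasing another by 1 subject to the addable-corner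
constraint of equation (sort-0)), for any `ℓ₁ > ℓ₂` the quantity
`⌊(T^{≤t}(ℓ₁) − T^{≤t}(ℓ₂))/k⌋` is non-decreasing in `t`; in particular the truncations
remain sorted: `T^{≤t}(ℓ₁) > T^{≤t}(ℓ₂)` whenever `ℓ₁ > ℓ₂`. -/
theorem truncations_floor_monotone_and_sorted
    (k : ℕ) (hk : 1 ≤ k) (g : ℕ) (T : ℕ → Fin k → ℤ)
    (hT0 : ∀ ℓ : Fin k, T 0 ℓ = (ℓ : ℤ) + 1)
    (hdist : ∀ t : ℕ, t ≤ g → ∀ ℓ1 ℓ2 : Fin k, ℓ1 ≠ ℓ2 →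
      ¬ (T t ℓ1 ≡ T t ℓ2 [ZMOD (k : ℤ)]))
    (hstep : ∀ t : ℕ, 1 ≤ t → t ≤ g →
      (∀ ℓ : Fin k, T t ℓ = T (t - 1) ℓ) ∨
      ∃ lm lp : Fin k, lm ≠ lp ∧
        T t lp = T (t - 1) lp + 1 ∧
        T t lm = T (t - 1) lm - 1 ∧
        (∀ ℓ : Fin k, ℓ ≠ lm → ℓ ≠ lp → T t ℓ = T (t - 1) ℓ) ∧
        T (t - 1) lm ≤ T (t - 1) lp - ((k : ℤ) - 1)) :
    ∀ ℓ1 ℓ2 : Fin k, ℓ2 < ℓ1 →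
      (∀ s t : ℕ, s ≤ t → t ≤ g →
        Int.fdiv (T s ℓ1 - T s ℓ2) (k : ℤ) ≤ Int.fdiv (T t ℓ1 - T t ℓ2) (k : ℤ)) ∧
      (∀ t : ℕ, t ≤ g → T t ℓ2 < T t ℓ1) :=
  truncations_floor_monotone_and_sorted_general k g T hT0 hdist hstep
end

section
/- Let \vec{e} = (e_1 ≤ ⋯ ≤ e_k) be a splitting type with distinct parts d_1 > ⋯ > d_s and multiplicities m_1, …, m_s, and identify {1,…,k} with pairs (j,n), 1 ≤ j ≤ s, 1 ≤ n ≤ m_j, lexicographically. Let w(\vec{e}) be the distinguished permutation of the k-staircase Γ(\vec{e}). Then for each (j,n): w(\vec{e})(j,n) = χ(O(\vec{e})(−d_j)) − (m_1 + ⋯ + m_j) + n, where χ(O(\vec{e})(m)) = ∑_{ℓ=1}^k (e_ℓ + m + 1). -/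
/-!
Write `h0 a`, `h1 a` and `chi a = h0 a - h1 a` for `h⁰`, `h¹` and `χ` of `O(e)(a)`, and
`N a = h0 a - h0 (a - 1) = #{ℓ | e ℓ ≥ -a}` (`numNonneg`). The height `h c` equals `h1 a` on the
column range `h0 (a - 1) < c ≤ h0 a`, so the diagonal indices `c - h c` of horizontal segments
form the union over `a` of the intervals `(chi a - N a, chi a]`, where `chi a - N a = segStart a`.
Since `chi a = chi (a - 1) + k`, the indices that are first in their residue class mod `k` form
the intervals `(chi a - N a, chi a - N (a - 1)]`. Such an interval is nonempty only for
`a = -d j`, where it has `m j` elements, and these blocks increase with `j`. The strictly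
increasing `w` enumerates their union, so `w (j, n)` is the `n`-th element of the `j`-th block.
-/

open Finset Function

theorem card_filter_lt_image_of_strictMono {α : Type*} [LinearOrder α] {k : ℕ}
    {f : Fin k → α} (hf : StrictMono f) (ℓ : Fin k) : #{x ∈ univ.image f | x < f ℓ} = ℓ := by
  rw [filter_image, card_image_of_injective _ hf.injective]
  simp_rw [hf.lt_iff_lt]
  rw [filter_gt_eq_Iio, Fin.card_Iio]

theorem card_filter_lt_biUnion_Ico {s : ℕ} {a b : Fin s → ℤ}
    (hab : ∀ ⦃i j⦄, i < j → b i ≤ a j) {j : Fin s} {t : ℤ} (ht : a j ≤ t) (ht' : t ≤ b j) :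
    #{x ∈ univ.biUnion (fun i => Ico (a i) (b i)) | x < t} =
      ∑ i ∈ univ.filter (· < j), (b i - a i).toNat + (t - a j).toNat := by
  have hblock : ∀ i, #{x ∈ Ico (a i) (b i) | x < t} =
      if i < j then (b i - a i).toNat else if i = j then (t - a j).toNat else 0 := by
    intro i
    rw [Ico_filter_lt, Int.card_Ico]
    rcases lt_trichotomy i j with hij | rfl | hji
    · have := hab hij
      rw [if_pos hij, min_eq_left (by omega)]
    · rw [if_neg (lt_irrefl _), if_pos rfl, min_eq_right ht']
    · have := hab hji
      rw [if_neg (not_lt.mpr hji.le), if_neg hji.ne']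
      omega
  rw [filter_biUnion, card_biUnion, sum_congr rfl fun i _ => hblock i, sum_ite]
  · simp
  · intro i _ i' _ hii'
    refine disjoint_left.mpr fun x hx hx' => ?_
    simp only [mem_filter, mem_Ico] at hx hx'
    rcases hii'.lt_or_gt with h | h <;> have := hab h <;> omega

namespace KStaircase

section Twists

variable {k : ℕ} (e : Fin k → ℤ)

def h0 (a : ℤ) : ℤ := ∑ ℓ, max 0 (e ℓ + a + 1)

def h1 (a : ℤ) : ℤ := ∑ ℓ, max 0 (-(e ℓ) - a - 1)

def chi (a : ℤ) : ℤ := ∑ ℓ, (e ℓ + a + 1)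

def numNonneg (a : ℤ) : ℕ := #{ℓ | -a ≤ e ℓ}

def segStart (a : ℤ) : ℤ := h0 e (a - 1) - h1 e a

theorem h0_nonneg (a : ℤ) : 0 ≤ h0 e a :=
  sum_nonneg fun _ _ => le_max_left _ _

theorem h0_mono : Monotone (h0 e) := fun _ _ hab =>
  sum_le_sum fun _ _ => max_le_max le_rfl (by omega)

theorem h1_anti : Antitone (h1 e) := fun _ _ hab =>
  sum_le_sum fun _ _ => max_le_max le_rfl (by omega)

theorem h0_sub_h1 (a : ℤ) : h0 e a - h1 e a = chi e a := by
  rw [h0, h1, chi, ← sum_sub_distrib]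
  exact sum_congr rfl fun ℓ _ => by omega

theorem h0_eq_zero_of_le {a : ℤ} (ha : a ≤ -∑ ℓ, |e ℓ| - 1) : h0 e a = 0 :=
  sum_eq_zero fun ℓ _ => by
    have := single_le_sum (fun i _ => abs_nonneg (e i)) (mem_univ ℓ)
    have := le_abs_self (e ℓ)
    omega

theorem chi_add_one (a : ℤ) : chi e (a + 1) = chi e a + k := by
  simp only [chi, sum_add_distrib, sum_const, card_univ, Fintype.card_fin, nsmul_eq_mul]
  ring

theorem chi_sub_one (a : ℤ) : chi e (a - 1) = chi e a - k := by
  simpa using (sub_eq_of_eq_add (chi_add_one e (a - 1))).symm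

theorem h0_sub_h0_sub_one (a : ℤ) : h0 e a - h0 e (a - 1) = numNonneg e a := by
  rw [h0, h0, numNonneg, ← sum_sub_distrib, card_filter, Nat.cast_sum]
  exact sum_congr rfl fun ℓ _ => by split_ifs <;> omega

theorem numNonneg_le (a : ℤ) : numNonneg e a ≤ k :=
  (card_filter_le _ _).trans (card_fin k).le

theorem segStart_eq (a : ℤ) : segStart e a = chi e a - numNonneg e a := by
  rw [← h0_sub_h1, ← h0_sub_h0_sub_one, segStart]
  ring

theorem segStart_mono : Monotone (segStart e) := fun a b hab => by
  have := h0_mono e (show a - 1 ≤ b - 1 by omega)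
  have := h1_anti e hab
  rw [segStart, segStart]
  omega

theorem segStart_le_chi (a : ℤ) : segStart e a ≤ chi e a := by
  rw [segStart_eq]
  omega

theorem segStart_sub_one_add (a : ℤ) :
    segStart e (a - 1) + k = segStart e a + #{ℓ | e ℓ = -a} := by
  have hsplit : numNonneg e a = numNonneg e (a - 1) + #{ℓ | e ℓ = -a} := by
    rw [numNonneg, numNonneg, ← card_union_of_disjoint
      (disjoint_filter.mpr fun ℓ _ h₁ h₂ => by omega), ← filter_or]
    exact congrArg card (filter_congr fun ℓ _ => by omega)
  rw [segStart_eq, segStart_eq, chi_sub_one, hsplit]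
  push_cast
  ring

theorem chi_le_segStart {a b : ℤ} (hab : a < b) : chi e a ≤ segStart e b := by
  have := chi_add_one e a
  have := segStart_eq e (a + 1)
  have := numNonneg_le e (a + 1)
  have := segStart_mono e (show a + 1 ≤ b by omega)
  omega

theorem segStart_sub_one_add_le {a b : ℤ} (hab : a < b) :
    segStart e (a - 1) + k ≤ segStart e b := by
  have := segStart_le_chi e (a - 1)
  have := chi_sub_one e a
  have := chi_le_segStart e hab
  omega

theorem first_in_residue_class_iff (t : ℤ) :
    ((∃ a, segStart e a < t ∧ t ≤ chi e a) ∧ ¬∃ a, segStart e a < t - k ∧ t - k ≤ chi e a) ↔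
      ∃ a, segStart e a < t ∧ t ≤ segStart e (a - 1) + k := by
  constructor
  · rintro ⟨⟨a, hlo, hhi⟩, hnot⟩
    refine ⟨a, hlo, not_lt.mp fun hgt => hnot ⟨a - 1, by omega, ?_⟩⟩
    have := chi_sub_one e a
    omega
  · rintro ⟨a, hlo, hhi⟩
    have := segStart_le_chi e (a - 1)
    have := chi_sub_one e a
    refine ⟨⟨a, hlo, by omega⟩, fun ⟨b, hblo, hbhi⟩ => ?_⟩
    rcases lt_or_ge b (a - 1) with hb | hb
    · have := chi_add_one e b
      have := chi_le_segStart e (show b + 1 < a by omega)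
      omega
    · have := segStart_mono e hb
      omega

theorem exists_eq_neg_of_segStart_lt {a : ℤ} (h : segStart e a < segStart e (a - 1) + k) :
    ∃ ℓ, e ℓ = -a := by
  rw [segStart_sub_one_add] at h
  obtain ⟨ℓ, hℓ⟩ := card_pos.mp (by omega : 0 < #{ℓ | e ℓ = -a})
  exact ⟨ℓ, (mem_filter.mp hℓ).2⟩

theorem exists_h0_sub_one_lt_le {c b : ℤ} (hc : 0 < c) (hb : c ≤ h0 e b) :
    ∃ a, h0 e (a - 1) < c ∧ c ≤ h0 e a := by
  have hbdd : ∀ z, c ≤ h0 e z → -∑ ℓ, |e ℓ| ≤ z := fun z hz => not_lt.mp fun hz' => by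
    rw [h0_eq_zero_of_le e (by omega)] at hz
    omega
  obtain ⟨a, ha, hmin⟩ := Int.exists_least_of_bdd ⟨_, hbdd⟩ ⟨b, hb⟩
  exact ⟨a, not_le.mp fun h => by have := hmin _ h; omega, ha⟩

end Twists

section Height

variable {k : ℕ} {e : Fin k → ℤ} {h : ℕ → ℤ}
  (hh : ∀ c : ℕ, 1 ≤ c → IsGreatest {v | ∃ a, (c : ℤ) ≤ h0 e a ∧ v = h1 e a} (h c))
include hh

theorem h_eq_h1 {c : ℕ} {a : ℤ} (hc : 1 ≤ c) (hlo : h0 e (a - 1) < c) (hhi : c ≤ h0 e a) :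
    h c = h1 e a := by
  obtain ⟨⟨b, hb, hcb⟩, hmax⟩ := hh c hc
  have hab : a ≤ b := not_lt.mp fun hba => by
    have := h0_mono e (show b ≤ a - 1 by omega)
    omega
  have := h1_anti e hab
  have := hmax ⟨a, hhi, rfl⟩
  omega

theorem exists_column_iff (t : ℤ) :
    (∃ c : ℕ, 1 ≤ c ∧ t = c - h c) ↔ ∃ a, segStart e a < t ∧ t ≤ chi e a := by
  constructor
  · rintro ⟨c, hc, rfl⟩
    obtain ⟨b, hb, -⟩ := (hh c hc).1
    obtain ⟨a, hlo, hhi⟩ := exists_h0_sub_one_lt_le e (by omega) hb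
    have := h0_sub_h1 e a
    have := h_eq_h1 hh hc hlo hhi
    exact ⟨a, by rw [segStart]; omega, by omega⟩
  · rintro ⟨a, hlo, hhi⟩
    rw [segStart] at hlo
    rw [← h0_sub_h1] at hhi
    have := h0_nonneg e (a - 1)
    have := h_eq_h1 hh (c := (t + h1 e a).toNat) (a := a) (by omega) (by omega) (by omega)
    exact ⟨(t + h1 e a).toNat, by omega, by omega⟩

end Height

section Multiplicities

variable {k s : ℕ} {e : Fin k → ℤ} {d : Fin s → ℤ} {m : Fin s → ℕ}

theorem card_filter_eq_sum_mult (hd : Injective d) (hcover : ∀ ℓ, ∃ j, e ℓ = d j)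
    (hm : ∀ j, m j = #{ℓ | e ℓ = d j}) (P : ℤ → Prop) [DecidablePred P] :
    #{ℓ | P (e ℓ)} = ∑ j ∈ univ.filter fun j => P (d j), m j := by
  have hunion : ({ℓ | P (e ℓ)} : Finset (Fin k)) =
      (univ.filter fun j => P (d j)).biUnion fun j => {ℓ | e ℓ = d j} := by
    ext ℓ
    simp only [mem_filter, mem_biUnion, mem_univ, true_and]
    obtain ⟨j, hj⟩ := hcover ℓ
    exact ⟨fun hP => ⟨j, hj ▸ hP, hj⟩, fun ⟨i, hP, hi⟩ => hi ▸ hP⟩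
  rw [hunion, card_biUnion fun i _ j _ hij => disjoint_filter.mpr fun ℓ _ hi hj =>
    hij (hd (hi.symm.trans hj))]
  exact sum_congr rfl fun j _ => (hm j).symm

theorem numNonneg_neg (hd : StrictAnti d) (hcover : ∀ ℓ, ∃ j, e ℓ = d j)
    (hm : ∀ j, m j = #{ℓ | e ℓ = d j}) (j : Fin s) :
    numNonneg e (-d j) = ∑ i ∈ univ.filter fun i => i ≤ j, m i := by
  rw [numNonneg, card_filter_eq_sum_mult hd.injective hcover hm fun v => -(-d j) ≤ v]
  simp_rw [neg_neg, hd.le_iff_ge]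

theorem segStart_neg_sub_one_add (hm : ∀ j, m j = #{ℓ | e ℓ = d j}) (j : Fin s) :
    segStart e (-d j - 1) + k = segStart e (-d j) + m j := by
  rw [segStart_sub_one_add, neg_neg, hm]

theorem exists_jump_iff_exists_neg (hcover : ∀ ℓ, ∃ j, e ℓ = d j) (t : ℤ) :
    (∃ a, segStart e a < t ∧ t ≤ segStart e (a - 1) + k) ↔
      ∃ j, segStart e (-d j) < t ∧ t ≤ segStart e (-d j - 1) + k := by
  refine ⟨fun ⟨a, hlo, hhi⟩ => ?_, fun ⟨j, hj⟩ => ⟨-d j, hj⟩⟩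
  obtain ⟨ℓ, hℓ⟩ := exists_eq_neg_of_segStart_lt e (hlo.trans_le hhi)
  obtain ⟨j, hj⟩ := hcover ℓ
  obtain rfl : a = -d j := by omega
  exact ⟨j, hlo, hhi⟩

end Multiplicities

end KStaircase

open KStaircase

theorem kstaircase_distinguished_permutation_values_general
    (k : ℕ) (e : Fin k → ℤ)
    (s : ℕ) (d : Fin s → ℤ) (hd : StrictAnti d)
    (hcover : ∀ ℓ : Fin k, ∃ j : Fin s, e ℓ = d j)
    (m : Fin s → ℕ)
    (hm : ∀ j : Fin s, m j = (Finset.univ.filter (fun ℓ : Fin k => e ℓ = d j)).card)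
    (h : ℕ → ℤ)
    (hh : ∀ n : ℕ, 1 ≤ n →
      IsGreatest {v : ℤ | ∃ mm : ℤ,
        (n : ℤ) ≤ ∑ ℓ : Fin k, max 0 (e ℓ + mm + 1) ∧
        v = ∑ ℓ : Fin k, max 0 (-(e ℓ) - mm - 1)} (h n))
    (w : Fin k → ℤ) (hwmono : StrictMono w)
    (hwspec : ∀ v : ℤ,
      ((∃ c : ℕ, 1 ≤ c ∧ v = (c : ℤ) - h c) ∧
        ¬ (∃ c : ℕ, 1 ≤ c ∧ v - (k : ℤ) = (c : ℤ) - h c)) ↔ ∃ ℓ : Fin k, w ℓ = v) :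
    ∀ (ℓ : Fin k) (j : Fin s) (n : ℕ),
      (ℓ : ℕ) = (∑ j' ∈ Finset.univ.filter (fun j' => j' < j), m j') + n → n < m j →
      w ℓ = (∑ ℓ' : Fin k, (e ℓ' + (-(d j)) + 1))
        - (∑ j' ∈ Finset.univ.filter (fun j' => j' ≤ j), (m j' : ℤ)) + ((n : ℤ) + 1) := by
  intro ℓ j n hℓ hn
  set lo : Fin s → ℤ := fun i => segStart e (-d i) + 1
  set hi : Fin s → ℤ := fun i => segStart e (-d i - 1) + k + 1
  have hlen : ∀ i, hi i - lo i = m i := fun i => by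
    have := segStart_neg_sub_one_add hm i
    simp only [lo, hi]
    omega
  have hsep : ∀ ⦃i i'⦄, i < i' → hi i ≤ lo i' := fun i i' hii' => by
    have := segStart_sub_one_add_le e (neg_lt_neg (hd hii'))
    simp only [lo, hi]
    omega
  have himage : univ.image w = univ.biUnion fun i => Ico (lo i) (hi i) := by
    ext t
    simp only [mem_image, mem_univ, true_and, mem_biUnion, mem_Ico]
    rw [← hwspec, exists_column_iff hh, exists_column_iff hh, first_in_residue_class_iff,
      exists_jump_iff_exists_neg hcover]
    exact exists_congr fun i => by simp only [lo, hi]; omega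
  have hlenj := hlen j
  obtain ⟨ℓ', -, hℓ'⟩ : ∃ ℓ' ∈ univ, w ℓ' = lo j + n := by
    rw [← mem_image, himage, mem_biUnion]
    exact ⟨j, mem_univ _, mem_Ico.mpr ⟨by omega, by omega⟩⟩
  have hcount := card_filter_lt_image_of_strictMono hwmono ℓ'
  rw [himage, hℓ', card_filter_lt_biUnion_Ico hsep (j := j) (by omega) (by omega)] at hcount
  obtain rfl : ℓ' = ℓ := by
    ext
    simp only [hlen, Int.toNat_natCast, add_sub_cancel_left] at hcount
    omega
  simp only [hℓ', lo, segStart_eq, numNonneg_neg hd hcover hm, chi]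
  push_cast
  ring

/-- Proposition `endpos`: the distinguished affine permutation `w(e)` of
the `k`-staircase `Γ(e)` — characterized by strict monotonicity and by the fact that its
values are exactly the diagonal indices `t` of horizontal boundary segments of `Γ(e)`
(namely `t = c − h(c)` for some column `c ≥ 1`) that are first in their residue class
(i.e. `t − k` is not of that form) — satisfies, under the lexicographic identification of
`{1,…,k}` with pairs `(j, n)` (`1 ≤ j ≤ s`, `1 ≤ n ≤ m_j`):
`w(e)(j, n) = χ(O(e)(−d_j)) − (m_1 + ⋯ + m_j) + n`. -/
theorem kstaircase_distinguished_permutation_values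
    (k : ℕ) (hk : 1 ≤ k) (e : Fin k → ℤ) (he : Monotone e)
    (s : ℕ) (d : Fin s → ℤ) (hd : StrictAnti d)
    (hcover : ∀ ℓ : Fin k, ∃ j : Fin s, e ℓ = d j)
    (hocc : ∀ j : Fin s, ∃ ℓ : Fin k, e ℓ = d j)
    (m : Fin s → ℕ)
    (hm : ∀ j : Fin s, m j = (Finset.univ.filter (fun ℓ : Fin k => e ℓ = d j)).card)
    (h : ℕ → ℤ)
    (hh : ∀ n : ℕ, 1 ≤ n →
      IsGreatest {v : ℤ | ∃ mm : ℤ,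
        (n : ℤ) ≤ ∑ ℓ : Fin k, max 0 (e ℓ + mm + 1) ∧
        v = ∑ ℓ : Fin k, max 0 (-(e ℓ) - mm - 1)} (h n))
    (w : Fin k → ℤ) (hwmono : StrictMono w)
    (hwspec : ∀ v : ℤ,
      ((∃ c : ℕ, 1 ≤ c ∧ v = (c : ℤ) - h c) ∧
        ¬ (∃ c : ℕ, 1 ≤ c ∧ v - (k : ℤ) = (c : ℤ) - h c)) ↔ ∃ ℓ : Fin k, w ℓ = v) :
    ∀ (ℓ : Fin k) (j : Fin s) (n : ℕ),
      (ℓ : ℕ) = (∑ j' ∈ Finset.univ.filter (fun j' => j' < j), m j') + n → n < m j →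
      w ℓ = (∑ ℓ' : Fin k, (e ℓ' + (-(d j)) + 1))
        - (∑ j' ∈ Finset.univ.filter (fun j' => j' ≤ j), (m j' : ℤ)) + ((n : ℤ) + 1) :=
  kstaircase_distinguished_permutation_values_general k e s d hd hcover m hm h hh w hwmono hwspec
end

section
/- With truncations T^{≤t} of a reduced word for the permutation w(\vec{e}) of a k-staircase Γ(\vec{e}) (indices identified with pairs (j,n) lexicographically): if n_1 ≥ n_2, then T^{≤t}(j, n_1) − T^{≤t}(j, n_2) ≤ k − 1 for all t. -/
/-- Corollary `same_layer`: with the truncation setup for the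
`k`-staircase `Γ(e)` (truncations start sorted at `T^{≤0}(ℓ) = ℓ`, have distinct
residues mod `k`, evolve by simple affine transpositions subject to the addable-corner
constraint, and end at the values `T^{≤g}(j,n) = χ(O(e)(−d_j)) − (m_1+⋯+m_j) + n`),
if `n₁ ≥ n₂` then `T^{≤t}(j, n₁) − T^{≤t}(j, n₂) ≤ k − 1` for all `t`. -/
theorem truncations_same_layer_bound
    (k : ℕ) (hk : 1 ≤ k) (g : ℕ) (e : Fin k → ℤ) (he : Monotone e)
    (s : ℕ) (d : Fin s → ℤ) (hd : StrictAnti d)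
    (m : Fin s → ℕ) (hm1 : ∀ j : Fin s, 1 ≤ m j) (hsum : ∑ j : Fin s, m j = k)
    (T : ℕ → Fin k → ℤ)
    (hT0 : ∀ ℓ : Fin k, T 0 ℓ = (ℓ : ℤ) + 1)
    (hdist : ∀ t : ℕ, t ≤ g → ∀ ℓ1 ℓ2 : Fin k, ℓ1 ≠ ℓ2 →
      ¬ (T t ℓ1 ≡ T t ℓ2 [ZMOD (k : ℤ)]))
    (hstep : ∀ t : ℕ, 1 ≤ t → t ≤ g →
      (∀ ℓ : Fin k, T t ℓ = T (t - 1) ℓ) ∨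
      ∃ lm lp : Fin k, lm ≠ lp ∧
        T t lp = T (t - 1) lp + 1 ∧
        T t lm = T (t - 1) lm - 1 ∧
        (∀ ℓ : Fin k, ℓ ≠ lm → ℓ ≠ lp → T t ℓ = T (t - 1) ℓ) ∧
        T (t - 1) lm ≤ T (t - 1) lp - ((k : ℤ) - 1))
    (hfin : ∀ (ℓ : Fin k) (j : Fin s) (n : ℕ),
      (ℓ : ℕ) = (∑ j' ∈ Finset.univ.filter (fun j' => j' < j), m j') + n → n < m j →
      T g ℓ = (∑ ℓ' : Fin k, (e ℓ' + (-(d j)) + 1))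
        - (∑ j' ∈ Finset.univ.filter (fun j' => j' ≤ j), (m j' : ℤ)) + ((n : ℤ) + 1)) :
    ∀ t : ℕ, t ≤ g → ∀ (ℓ1 ℓ2 : Fin k) (j : Fin s) (n1 n2 : ℕ),
      (ℓ1 : ℕ) = (∑ j' ∈ Finset.univ.filter (fun j' => j' < j), m j') + n1 →
      (ℓ2 : ℕ) = (∑ j' ∈ Finset.univ.filter (fun j' => j' < j), m j') + n2 →
      n1 < m j → n2 < m j → n2 ≤ n1 →
      T t ℓ1 - T t ℓ2 ≤ (k : ℤ) - 1 := by

  have hk1 : (1:ℤ) ≤ (k:ℤ) := by exact_mod_cast hk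
  have key : ∀ dd t : ℕ, t + dd = g → ∀ (ℓ1 ℓ2 : Fin k) (j : Fin s) (n1 n2 : ℕ),
      (ℓ1 : ℕ) = (∑ j' ∈ Finset.univ.filter (fun j' => j' < j), m j') + n1 →
      (ℓ2 : ℕ) = (∑ j' ∈ Finset.univ.filter (fun j' => j' < j), m j') + n2 →
      n1 < m j → n2 < m j → n2 ≤ n1 →
      T t ℓ1 - T t ℓ2 ≤ (k : ℤ) - 1 := by
    intro dd
    induction dd with
    | zero =>
      intro t ht ℓ1 ℓ2 j n1 n2 h1 h2 hn1 hn2 hle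
      have htg : t = g := by omega
      subst htg
      have hmk : m j ≤ k := by
        have := Finset.single_le_sum (f := m) (fun i _ => Nat.zero_le _) (Finset.mem_univ j)
        omega
      have hcast : (n1:ℤ) - (n2:ℤ) ≤ (k:ℤ) - 1 := by omega
      rw [hfin ℓ1 j n1 h1 hn1, hfin ℓ2 j n2 h2 hn2]
      linarith
    | succ dd ih =>
      intro t ht ℓ1 ℓ2 j n1 n2 h1 h2 hn1 hn2 hle
      have hIH := ih (t + 1) (by omega) ℓ1 ℓ2 j n1 n2 h1 h2 hn1 hn2 hle
      have hstep1 := hstep (t + 1) (by omega) (by omega)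
      simp only [Nat.add_sub_cancel] at hstep1
      rcases hstep1 with heq | ⟨lm, lp, hne, hp, hm, hoth, hcon⟩
      · rw [← heq ℓ1, ← heq ℓ2]; exact hIH
      · by_cases h12 : ℓ1 = ℓ2
        · rw [h12]; linarith
        have hres : T t ℓ1 - T t ℓ2 ≠ (k:ℤ) := by
          intro h
          apply hdist t (by omega) ℓ1 ℓ2 h12
          have heq2 : T t ℓ1 = T t ℓ2 + (k:ℤ) := by linarith
          show T t ℓ1 % (k:ℤ) = T t ℓ2 % (k:ℤ)
          rw [heq2]
          simp [Int.add_mul_emod_self_left]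
        by_cases h1p : ℓ1 = lp
        · have h1' : T (t + 1) ℓ1 = T t ℓ1 + 1 := by rw [h1p]; exact hp
          by_cases h2m : ℓ2 = lm
          · -- contradiction: gap was ≥ k-1 and grows
            have h2' : T (t + 1) ℓ2 = T t ℓ2 - 1 := by rw [h2m]; exact hm
            have hc : T t ℓ2 ≤ T t ℓ1 - ((k:ℤ) - 1) := by rw [h1p, h2m]; exact hcon
            rw [h1', h2'] at hIH
            linarith
          · have h2p : ℓ2 ≠ lp := by rw [← h1p]; exact fun hh => h12 hh.symm
            rw [h1', hoth ℓ2 h2m h2p] at hIH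
            linarith
        · by_cases h1m : ℓ1 = lm
          · have h1' : T (t + 1) ℓ1 = T t ℓ1 - 1 := by rw [h1m]; exact hm
            by_cases h2p : ℓ2 = lp
            · have hc : T t ℓ1 ≤ T t ℓ2 - ((k:ℤ) - 1) := by rw [h1m, h2p]; exact hcon
              linarith
            · have h2m : ℓ2 ≠ lm := by rw [← h1m]; exact fun hh => h12 hh.symm
              rw [h1', hoth ℓ2 h2m h2p] at hIH
              have hlt : T t ℓ1 - T t ℓ2 < (k:ℤ) :=
                lt_of_le_of_ne (by linarith) hres
              have := Int.lt_iff_add_one_le.mp hlt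
              linarith
          · rw [hoth ℓ1 h1m h1p] at hIH
            by_cases h2p : ℓ2 = lp
            · have h2' : T (t + 1) ℓ2 = T t ℓ2 + 1 := by rw [h2p]; exact hp
              rw [h2'] at hIH
              have hlt : T t ℓ1 - T t ℓ2 < (k:ℤ) :=
                lt_of_le_of_ne (by linarith) hres
              have := Int.lt_iff_add_one_le.mp hlt
              linarith
            · by_cases h2m : ℓ2 = lm
              · have h2' : T (t + 1) ℓ2 = T t ℓ2 - 1 := by rw [h2m]; exact hm
                rw [h2'] at hIH
                linarith
              · rw [hoth ℓ2 h2m h2p] at hIH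
                exact hIH
  intro t ht ℓ1 ℓ2 j n1 n2 h1 h2 hn1 hn2 hle
  exact key (g - t) t (by omega) ℓ1 ℓ2 j n1 n2 h1 h2 hn1 hn2 hle
end

section
/- With the truncation setup for the k-staircase Γ(\vec{e}): if at step t the transposition s_{j_t} decreases the value at index (j_−, n_−) and increases the value at index (j_+, n_+), then j_− < j_+. -/
private lemma sum_block_aux {s : ℕ} (m : Fin s → ℕ) {a b : Fin s} (h : a < b) :
    (∑ j' ∈ Finset.univ.filter (fun j' => j' < a), m j') + m a ≤
      ∑ j' ∈ Finset.univ.filter (fun j' => j' < b), m j' := by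
  have h2 : a ∉ Finset.univ.filter (fun j' => j' < a) := by simp
  have h1 : insert a (Finset.univ.filter (fun j' => j' < a)) ⊆
      Finset.univ.filter (fun j' => j' < b) := by
    intro x hx
    rcases Finset.mem_insert.mp hx with rfl | hx
    · simpa using h
    · simp only [Finset.mem_filter, Finset.mem_univ, true_and] at hx ⊢
      exact hx.trans h
  have h3 := Finset.sum_le_sum_of_subset (f := m) h1
  rwa [Finset.sum_insert h2, add_comm] at h3

private lemma aux_mono (k : ℕ) (hk : 1 ≤ k) (g : ℕ) (T : ℕ → Fin k → ℤ)
    (hT0 : ∀ ℓ : Fin k, T 0 ℓ = (ℓ : ℤ) + 1)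
    (hdist : ∀ t : ℕ, t ≤ g → ∀ ℓ1 ℓ2 : Fin k, ℓ1 ≠ ℓ2 →
      ¬ (T t ℓ1 ≡ T t ℓ2 [ZMOD (k : ℤ)]))
    (hstep : ∀ t : ℕ, 1 ≤ t → t ≤ g →
      (∀ ℓ : Fin k, T t ℓ = T (t - 1) ℓ) ∨
      ∃ lm lp : Fin k, lm ≠ lp ∧
        T t lp = T (t - 1) lp + 1 ∧
        T t lm = T (t - 1) lm - 1 ∧
        (∀ ℓ : Fin k, ℓ ≠ lm → ℓ ≠ lp → T t ℓ = T (t - 1) ℓ) ∧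
        T (t - 1) lm ≤ T (t - 1) lp - ((k : ℤ) - 1)) :
    ∀ t, t ≤ g → StrictMono (T t) := by
  intro t
  induction t with
  | zero =>
    intro _ a b hab
    rw [hT0, hT0]
    have h1 : (a : ℕ) < (b : ℕ) := hab
    omega
  | succ t ih =>
    intro h
    have iht := ih (by omega)
    rcases hstep (t + 1) (by omega) h with hall | ⟨lm', lp', hne', hup', hdn', hoth', hcon'⟩
    · simp only [Nat.add_sub_cancel] at hall
      intro a b hab
      rw [hall a, hall b]
      exact iht hab
    · simp only [Nat.add_sub_cancel] at hup' hdn' hoth' hcon'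
      have hk1 : (1 : ℤ) ≤ (k : ℤ) := by exact_mod_cast hk
      have hlt : lm' < lp' := by
        rcases lt_trichotomy lm' lp' with h1 | h1 | h1
        · exact h1
        · exact absurd h1 hne'
        · have := iht h1
          linarith
      intro a b hab
      have hne_ab : T (t + 1) a ≠ T (t + 1) b := by
        intro hEq
        exact hdist (t + 1) h a b (ne_of_lt hab) (hEq ▸ Int.ModEq.refl _)
      have hib : T t a + 1 ≤ T t b := Int.lt_iff_add_one_le.mp (iht hab)
      have E : ∀ ℓ : Fin k, T (t + 1) ℓ = T t ℓ ∨
          (ℓ = lp' ∧ T (t + 1) ℓ = T t ℓ + 1) ∨ (ℓ = lm' ∧ T (t + 1) ℓ = T t ℓ - 1) := by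
        intro ℓ
        rcases eq_or_ne ℓ lm' with rfl | hm
        · exact Or.inr (Or.inr ⟨rfl, hdn'⟩)
        rcases eq_or_ne ℓ lp' with rfl | hp
        · exact Or.inr (Or.inl ⟨rfl, hup'⟩)
        · exact Or.inl (hoth' ℓ hm hp)
      have hle : T (t + 1) a ≤ T (t + 1) b := by
        rcases E a with ea | ⟨hqa, ea⟩ | ⟨hqa, ea⟩ <;>
          rcases E b with eb | ⟨hqb, eb⟩ | ⟨hqb, eb⟩ <;>
          try linarith
        -- remaining case: a = lp', b = lm'
        exact absurd (show lp' < lm' by rw [← hqa, ← hqb]; exact hab)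
          (not_lt.mpr hlt.le)
      exact lt_of_le_of_ne hle hne_ab

private lemma aux_same_layer (k : ℕ) (hk : 1 ≤ k) (g : ℕ) (s : ℕ)
    (e : Fin k → ℤ) (d : Fin s → ℤ) (m : Fin s → ℕ)
    (hsum : ∑ j : Fin s, m j = k)
    (T : ℕ → Fin k → ℤ)
    (hdist : ∀ t : ℕ, t ≤ g → ∀ ℓ1 ℓ2 : Fin k, ℓ1 ≠ ℓ2 →
      ¬ (T t ℓ1 ≡ T t ℓ2 [ZMOD (k : ℤ)]))
    (hstep : ∀ t : ℕ, 1 ≤ t → t ≤ g →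
      (∀ ℓ : Fin k, T t ℓ = T (t - 1) ℓ) ∨
      ∃ lm lp : Fin k, lm ≠ lp ∧
        T t lp = T (t - 1) lp + 1 ∧
        T t lm = T (t - 1) lm - 1 ∧
        (∀ ℓ : Fin k, ℓ ≠ lm → ℓ ≠ lp → T t ℓ = T (t - 1) ℓ) ∧
        T (t - 1) lm ≤ T (t - 1) lp - ((k : ℤ) - 1))
    (hfin : ∀ (ℓ : Fin k) (j : Fin s) (n : ℕ),
      (ℓ : ℕ) = (∑ j' ∈ Finset.univ.filter (fun j' => j' < j), m j') + n → n < m j →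
      T g ℓ = (∑ ℓ' : Fin k, (e ℓ' + (-(d j)) + 1))
        - (∑ j' ∈ Finset.univ.filter (fun j' => j' ≤ j), (m j' : ℤ)) + ((n : ℤ) + 1)) :
    ∀ dlt t, t + dlt = g →
      ∀ (j : Fin s) (ℓ1 ℓ2 : Fin k) (n1 n2 : ℕ),
        (ℓ1 : ℕ) = (∑ j' ∈ Finset.univ.filter (fun j' => j' < j), m j') + n1 → n1 < m j →
        (ℓ2 : ℕ) = (∑ j' ∈ Finset.univ.filter (fun j' => j' < j), m j') + n2 → n2 < m j →
        T t ℓ2 - T t ℓ1 ≤ (k : ℤ) - 1 := by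
  intro dlt
  induction dlt with
  | zero =>
    intro t ht j ℓ1 ℓ2 n1 n2 h1 hn1 h2 hn2
    have ht' : t = g := by omega
    subst ht'
    rw [hfin ℓ2 j n2 h2 hn2, hfin ℓ1 j n1 h1 hn1]
    have hmk : m j ≤ k := hsum ▸ Finset.single_le_sum (f := m)
      (fun i _ => Nat.zero_le _) (Finset.mem_univ j)
    have c1 : (n2 : ℤ) < (m j : ℤ) := by exact_mod_cast hn2
    have c2 : ((m j) : ℤ) ≤ (k : ℤ) := by exact_mod_cast hmk
    have c3 : (0 : ℤ) ≤ (n1 : ℤ) := Int.natCast_nonneg n1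
    linarith
  | succ dlt ih =>
    intro t ht j ℓ1 ℓ2 n1 n2 h1 hn1 h2 hn2
    have htg : t ≤ g := by omega
    have ih2 := ih (t + 1) (by omega) j ℓ1 ℓ2 n1 n2 h1 hn1 h2 hn2
    rcases hstep (t + 1) (by omega) (by omega) with hall | ⟨lm', lp', hne', hup', hdn', hoth', hcon'⟩
    · simp only [Nat.add_sub_cancel] at hall
      rw [← hall ℓ2, ← hall ℓ1]
      exact ih2
    · simp only [Nat.add_sub_cancel] at hup' hdn' hoth' hcon'
      have hk1 : (1 : ℤ) ≤ (k : ℤ) := by exact_mod_cast hk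
      rcases eq_or_ne ℓ1 ℓ2 with rfl | hneq
      · linarith
      have E : ∀ ℓ : Fin k, T (t + 1) ℓ = T t ℓ ∨
          (ℓ = lp' ∧ T (t + 1) ℓ = T t ℓ + 1) ∨ (ℓ = lm' ∧ T (t + 1) ℓ = T t ℓ - 1) := by
        intro ℓ
        rcases eq_or_ne ℓ lm' with rfl | hm
        · exact Or.inr (Or.inr ⟨rfl, hdn'⟩)
        rcases eq_or_ne ℓ lp' with rfl | hp
        · exact Or.inr (Or.inl ⟨rfl, hup'⟩)
        · exact Or.inl (hoth' ℓ hm hp)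
      have key : T t ℓ2 - T t ℓ1 ≤ (k : ℤ) := by
        rcases E ℓ1 with e1 | ⟨hq1, e1⟩ | ⟨hq1, e1⟩ <;>
          rcases E ℓ2 with e2 | ⟨hq2, e2⟩ | ⟨hq2, e2⟩ <;>
          try linarith
        -- remaining case: ℓ1 = lp', ℓ2 = lm'
        rw [← hq1, ← hq2] at hcon'
        linarith
      rcases lt_or_ge ((k : ℤ) - 1) (T t ℓ2 - T t ℓ1) with hbig | hok
      · exfalso
        have heqk : T t ℓ2 - T t ℓ1 = (k : ℤ) := le_antisymm key (by linarith)
        exact hdist t htg ℓ1 ℓ2 hneq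
          (Int.modEq_iff_dvd.mpr ⟨1, by rw [mul_one]; exact heqk⟩)
      · exact hok

/-- Corollary `jpm`: with the truncation setup for the `k`-staircase
`Γ(e)`, if at step `t` the transposition decreases the value at index `(j₋, n₋)` and
increases the value at index `(j₊, n₊)` (with the constraint
`T^{≤t}(j₋,n₋) ≤ T^{≤t}(j₊,n₊) − (k+1)` of equation (sort-0)), then `j₋ < j₊`. -/
theorem truncation_swap_layers_increase
    (k : ℕ) (hk : 1 ≤ k) (g : ℕ) (e : Fin k → ℤ) (he : Monotone e)
    (s : ℕ) (d : Fin s → ℤ) (hd : StrictAnti d)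
    (m : Fin s → ℕ) (hm1 : ∀ j : Fin s, 1 ≤ m j) (hsum : ∑ j : Fin s, m j = k)
    (T : ℕ → Fin k → ℤ)
    (hT0 : ∀ ℓ : Fin k, T 0 ℓ = (ℓ : ℤ) + 1)
    (hdist : ∀ t : ℕ, t ≤ g → ∀ ℓ1 ℓ2 : Fin k, ℓ1 ≠ ℓ2 →
      ¬ (T t ℓ1 ≡ T t ℓ2 [ZMOD (k : ℤ)]))
    (hstep : ∀ t : ℕ, 1 ≤ t → t ≤ g →
      (∀ ℓ : Fin k, T t ℓ = T (t - 1) ℓ) ∨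
      ∃ lm lp : Fin k, lm ≠ lp ∧
        T t lp = T (t - 1) lp + 1 ∧
        T t lm = T (t - 1) lm - 1 ∧
        (∀ ℓ : Fin k, ℓ ≠ lm → ℓ ≠ lp → T t ℓ = T (t - 1) ℓ) ∧
        T (t - 1) lm ≤ T (t - 1) lp - ((k : ℤ) - 1))
    (hfin : ∀ (ℓ : Fin k) (j : Fin s) (n : ℕ),
      (ℓ : ℕ) = (∑ j' ∈ Finset.univ.filter (fun j' => j' < j), m j') + n → n < m j →
      T g ℓ = (∑ ℓ' : Fin k, (e ℓ' + (-(d j)) + 1))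
        - (∑ j' ∈ Finset.univ.filter (fun j' => j' ≤ j), (m j' : ℤ)) + ((n : ℤ) + 1))
    (t : ℕ) (ht1 : 1 ≤ t) (htg : t ≤ g)
    (lm lp : Fin k) (hne : lm ≠ lp)
    (hup : T t lp = T (t - 1) lp + 1)
    (hdown : T t lm = T (t - 1) lm - 1)
    (hoth : ∀ ℓ : Fin k, ℓ ≠ lm → ℓ ≠ lp → T t ℓ = T (t - 1) ℓ)
    (hsort0 : T t lm ≤ T t lp - ((k : ℤ) + 1))
    (jm jp : Fin s) (nm np : ℕ)
    (hlm : (lm : ℕ) = (∑ j' ∈ Finset.univ.filter (fun j' => j' < jm), m j') + nm)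
    (hnm : nm < m jm)
    (hlp : (lp : ℕ) = (∑ j' ∈ Finset.univ.filter (fun j' => j' < jp), m j') + np)
    (hnp : np < m jp) :
    jm < jp := by
  have hk1 : (1 : ℤ) ≤ (k : ℤ) := by exact_mod_cast hk
  have hmono := aux_mono k hk g T hT0 hdist hstep t htg
  have hlmp : lm < lp := by
    have h1 : T t lm < T t lp := by linarith
    exact hmono.lt_iff_lt.mp h1
  have hjm_ne : jm ≠ jp := by
    rintro rfl
    have h1 := aux_same_layer k hk g s e d m hsum T hdist hstep hfin
      (g - t) t (by omega) jm lm lp nm np hlm hnm hlp hnp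
    linarith
  rcases lt_or_ge jm jp with h | h
  · exact h
  · exfalso
    have hjp : jp < jm := lt_of_le_of_ne h (Ne.symm hjm_ne)
    have hblock := sum_block_aux m hjp
    have hval : (lm : ℕ) < (lp : ℕ) := hlmp
    omega
end

section
/- With the truncation setup for the k-staircase Γ(\vec{e}): if j' > j, then for all t, T^{≤g}(j', n') − T^{≤t}(j', n') ≥ T^{≤g}(j, n) − T^{≤t}(j, n). Equivalently, higher layers have 'more remaining increase'. -/
def tdlP {s : ℕ} (m : Fin s → ℕ) (j : Fin s) : ℕ :=
  ∑ j'' ∈ Finset.univ.filter (fun j'' => j'' < j), m j''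

lemma tdl_filter_le_eq {s : ℕ} (j : Fin s) :
    Finset.univ.filter (fun j' => j' ≤ j) = insert j (Finset.univ.filter (fun j' => j' < j)) := by
  ext x
  simp only [Finset.mem_insert, Finset.mem_filter, Finset.mem_univ, true_and]
  constructor
  · intro h
    rcases lt_or_eq_of_le h with h | h
    · exact Or.inr h
    · exact Or.inl h
  · rintro (rfl | h)
    · exact le_refl _
    · exact le_of_lt h

lemma tdl_Psum_le {s k : ℕ} (m : Fin s → ℕ) (hsum : ∑ j, m j = k) (j : Fin s) :
    tdlP m j + m j ≤ k := by
  rw [← hsum]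
  have h1 : tdlP m j + m j = ∑ j'' ∈ Finset.univ.filter (fun j'' => j'' ≤ j), m j'' := by
    rw [tdl_filter_le_eq, Finset.sum_insert (by simp), tdlP]
    ring
  rw [h1]
  exact Finset.sum_le_sum_of_subset (Finset.filter_subset _ _)

lemma tdl_Qsum {s : ℕ} (m : Fin s → ℕ) (j : Fin s) :
    (∑ j' ∈ Finset.univ.filter (fun j' => j' ≤ j), (m j' : ℤ))
      = ((tdlP m j : ℕ) : ℤ) + (m j : ℤ) := by
  rw [tdl_filter_le_eq, Finset.sum_insert (by simp), tdlP]
  push_cast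
  ring

lemma tdl_Psum_succ {s : ℕ} (m : Fin s → ℕ) {j1 j2 : Fin s} (h : (j2 : ℕ) = (j1 : ℕ) + 1) :
    tdlP m j2 = tdlP m j1 + m j1 := by
  have heq : Finset.univ.filter (fun j'' => j'' < j2)
      = insert j1 (Finset.univ.filter (fun j'' => j'' < j1)) := by
    ext x
    simp only [Finset.mem_insert, Finset.mem_filter, Finset.mem_univ, true_and,
      Fin.lt_def, Fin.ext_iff]
    omega
  rw [tdlP, tdlP, heq, Finset.sum_insert (by simp)]
  ring

lemma tdl_strictMono_gap {k : ℕ} {f : Fin k → ℤ} (hf : StrictMono f) :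
    ∀ (a b : Fin k), (a : ℕ) ≤ (b : ℕ) → ((b : ℕ) : ℤ) - ((a : ℕ) : ℤ) ≤ f b - f a := by
  have key : ∀ (p : ℕ) (a b : Fin k), (b : ℕ) = (a : ℕ) + p → (p : ℤ) ≤ f b - f a := by
    intro p
    induction p with
    | zero =>
      intro a b h
      have : a = b := Fin.ext (by omega)
      subst this; simp
    | succ p ih =>
      intro a b h
      have hc : (a : ℕ) + p < k := by have := b.isLt; omega
      have h1 : (p : ℤ) ≤ f ⟨(a : ℕ) + p, hc⟩ - f a := ih a ⟨(a : ℕ) + p, hc⟩ rfl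
      have h2 : f ⟨(a : ℕ) + p, hc⟩ < f b := hf (by simp [Fin.lt_def]; omega)
      push_cast
      omega
  intro a b hab
  have := key ((b : ℕ) - (a : ℕ)) a b (by omega)
  have hc : (((b : ℕ) - (a : ℕ) : ℕ) : ℤ) = ((b : ℕ) : ℤ) - ((a : ℕ) : ℤ) := by
    omega
  omega
/-- Corollary `distinct layers`: with the truncation setup for the
`k`-staircase `Γ(e)`, if `j' > j` then for all `t`,
`T^{≤g}(j', n') − T^{≤t}(j', n') ≥ T^{≤g}(j, n) − T^{≤t}(j, n)`:
higher layers have more remaining increase. -/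
theorem truncations_distinct_layers
    (k : ℕ) (hk : 1 ≤ k) (g : ℕ) (e : Fin k → ℤ) (he : Monotone e)
    (s : ℕ) (d : Fin s → ℤ) (hd : StrictAnti d)
    (m : Fin s → ℕ) (hm1 : ∀ j : Fin s, 1 ≤ m j) (hsum : ∑ j : Fin s, m j = k)
    (T : ℕ → Fin k → ℤ)
    (hT0 : ∀ ℓ : Fin k, T 0 ℓ = (ℓ : ℤ) + 1)
    (hdist : ∀ t : ℕ, t ≤ g → ∀ ℓ1 ℓ2 : Fin k, ℓ1 ≠ ℓ2 →
      ¬ (T t ℓ1 ≡ T t ℓ2 [ZMOD (k : ℤ)]))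
    (hstep : ∀ t : ℕ, 1 ≤ t → t ≤ g →
      (∀ ℓ : Fin k, T t ℓ = T (t - 1) ℓ) ∨
      ∃ lm lp : Fin k, lm ≠ lp ∧
        T t lp = T (t - 1) lp + 1 ∧
        T t lm = T (t - 1) lm - 1 ∧
        (∀ ℓ : Fin k, ℓ ≠ lm → ℓ ≠ lp → T t ℓ = T (t - 1) ℓ) ∧
        T (t - 1) lm ≤ T (t - 1) lp - ((k : ℤ) - 1))
    (hfin : ∀ (ℓ : Fin k) (j : Fin s) (n : ℕ),
      (ℓ : ℕ) = (∑ j' ∈ Finset.univ.filter (fun j' => j' < j), m j') + n → n < m j →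
      T g ℓ = (∑ ℓ' : Fin k, (e ℓ' + (-(d j)) + 1))
        - (∑ j' ∈ Finset.univ.filter (fun j' => j' ≤ j), (m j' : ℤ)) + ((n : ℤ) + 1)) :
    ∀ t : ℕ, t ≤ g → ∀ (ℓ ℓ' : Fin k) (j j' : Fin s) (n n' : ℕ),
      (ℓ : ℕ) = (∑ j'' ∈ Finset.univ.filter (fun j'' => j'' < j), m j'') + n →
      (ℓ' : ℕ) = (∑ j'' ∈ Finset.univ.filter (fun j'' => j'' < j'), m j'') + n' →
      n < m j → n' < m j' → j < j' →
      T g ℓ - T t ℓ ≤ T g ℓ' - T t ℓ' := by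
  intro t ht ℓ ℓ' j j' n n' hℓ hℓ' hn hn' hjj'
  have hk0 : (0 : ℤ) < (k : ℤ) := by exact_mod_cast hk
  -- distinct values at every time ≤ g
  have hNe : ∀ t0, t0 ≤ g → ∀ a b : Fin k, a ≠ b → T t0 a ≠ T t0 b := by
    intro t0 ht0 a b hab h
    exact hdist t0 ht0 a b hab (by rw [h])
  have hNd : ∀ t0, t0 ≤ g → ∀ a b : Fin k, a ≠ b → ¬ ((k : ℤ) ∣ (T t0 a - T t0 b)) := by
    intro t0 ht0 a b hab hdvd
    exact hdist t0 ht0 b a (Ne.symm hab) (Int.modEq_iff_dvd.mpr hdvd)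
  -- T t0 is strictly monotone for all t0 ≤ g
  have hSM : ∀ t0, t0 ≤ g → StrictMono (T t0) := by
    intro t0
    induction t0 with
    | zero =>
      intro _ a b hab
      rw [hT0, hT0]
      have h1 : (a : ℕ) < (b : ℕ) := hab
      have h2 : ((a : ℕ) : ℤ) < ((b : ℕ) : ℤ) := by exact_mod_cast h1
      omega
    | succ t0 ih =>
      intro hle a b hab
      have ht0 : t0 ≤ g := by omega
      have hprev := ih ht0
      have hne2 : T (t0 + 1) a ≠ T (t0 + 1) b := hNe (t0 + 1) hle a b (ne_of_lt hab)
      rcases hstep (t0 + 1) (by omega) hle with hid | ⟨lm, lp, hlmlp, hp, hmm, hoth, hgap⟩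
      · simp only [Nat.add_sub_cancel] at hid
        rw [hid a, hid b]; exact hprev hab
      · simp only [Nat.add_sub_cancel] at hp hmm hoth hgap
        have hvlt : T t0 a < T t0 b := hprev hab
        have h475 : T (t0 + 1) a ≤ T (t0 + 1) b := by
          by_cases hbm : b = lm
          · subst hbm
            by_cases hap : a = lp
            · exfalso; subst hap; linarith
            · rw [hmm, hoth a (ne_of_lt hab) hap]
              omega
          · by_cases hap : a = lp
            · subst hap
              rw [hp, hoth b hbm (ne_of_lt hab).symm]
              omega
            · have hb2 : T t0 b ≤ T (t0 + 1) b := by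
                by_cases hbp : b = lp
                · subst hbp; rw [hp]; omega
                · rw [hoth b hbm hbp]
              have ha2 : T (t0 + 1) a ≤ T t0 a := by
                by_cases ham : a = lm
                · subst ham; rw [hmm]; omega
                · rw [hoth a ham hap]
              linarith
        exact lt_of_le_of_ne h475 hne2
  -- floor monotonicity, in the form of an upper bound on later-minus-earlier pair gaps
  have hM : ∀ (u t0 : ℕ), t0 + u = g → ∀ a b : Fin k, a < b →
      T t0 b - T t0 a ≤ T g b - T g a + ((k : ℤ) - 1) - (T g b - T g a) % (k : ℤ) := by
    intro u
    induction u with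
    | zero =>
      intro t0 h a b hab
      have h0 : t0 = g := by omega
      subst h0
      have h1 : 0 ≤ (T t0 b - T t0 a) % (k : ℤ) := Int.emod_nonneg _ (by omega)
      have h2 : (T t0 b - T t0 a) % (k : ℤ) < (k : ℤ) := Int.emod_lt_of_pos _ hk0
      linarith
    | succ u ih =>
      intro t0 h a b hab
      have hle1 : t0 + 1 ≤ g := by omega
      have ht0g : t0 ≤ g := by omega
      have IH := ih (t0 + 1) (by omega) a b hab
      rcases hstep (t0 + 1) (by omega) hle1 with hid | ⟨lm, lp, hlmlp, hp, hmm, hoth, hgap⟩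
      · simp only [Nat.add_sub_cancel] at hid
        rw [hid a, hid b] at IH
        exact IH
      · simp only [Nat.add_sub_cancel] at hp hmm hoth hgap
        have hstep1 : T (t0 + 1) b - T (t0 + 1) a = (T t0 b - T t0 a) - 1 →
            T t0 b - T t0 a ≤ T g b - T g a + ((k : ℤ) - 1) - (T g b - T g a) % (k : ℤ) := by
          intro hz1
          have hnd := hNd t0 ht0g b a (ne_of_lt hab).symm
          have hxle : T t0 b - T t0 a
              ≤ T g b - T g a + ((k : ℤ) - 1) - (T g b - T g a) % (k : ℤ) + 1 := by
            rw [hz1] at IH; linarith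
          have hdvd : (k : ℤ) ∣ (T g b - T g a + ((k : ℤ) - 1) - (T g b - T g a) % (k : ℤ) + 1) := by
            have h1 : (k : ℤ) ∣ (T g b - T g a) - (T g b - T g a) % (k : ℤ) :=
              Int.dvd_self_sub_of_emod_eq rfl
            have h2 := dvd_add h1 (dvd_refl (k : ℤ))
            have h3 : T g b - T g a + ((k : ℤ) - 1) - (T g b - T g a) % (k : ℤ) + 1
                = ((T g b - T g a) - (T g b - T g a) % (k : ℤ)) + (k : ℤ) := by ring
            rwa [h3]
          rcases lt_or_eq_of_le hxle with h | h
          · linarith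
          · exact absurd (by rw [h]; exact hdvd) hnd
        by_cases hbm : b = lm
        · subst hbm
          by_cases hap : a = lp
          · exfalso; subst hap
            have := hSM t0 ht0g hab
            linarith
          · exact hstep1 (by rw [hmm, hoth a (ne_of_lt hab) hap]; ring)
        · by_cases hap : a = lp
          · subst hap
            exact hstep1 (by rw [hp, hoth b hbm (ne_of_lt hab).symm]; ring)
          · have hb2 : T t0 b ≤ T (t0 + 1) b := by
              by_cases hbp : b = lp
              · subst hbp; rw [hp]; omega
              · rw [hoth b hbm hbp]
            have ha2 : T (t0 + 1) a ≤ T t0 a := by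
              by_cases ham : a = lm
              · subst ham; rw [hmm]; omega
              · rw [hoth a ham hap]
            linarith
  have hM' : ∀ t0, t0 ≤ g → ∀ a b : Fin k, a < b →
      T t0 b - T t0 a ≤ T g b - T g a + ((k : ℤ) - 1) - (T g b - T g a) % (k : ℤ) :=
    fun t0 ht0 => hM (g - t0) t0 (by omega)
  -- within a layer, the remaining increase is non-increasing
  have hW : ∀ t0, t0 ≤ g → ∀ (jj : Fin s) (n1 n2 : ℕ) (a b : Fin k),
      (a : ℕ) = tdlP m jj + n1 → (b : ℕ) = tdlP m jj + n2 → n1 ≤ n2 → n2 < m jj →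
      T g b - T t0 b ≤ T g a - T t0 a := by
    intro t0 ht0 jj n1 n2 a b ha hb h12 h2
    rcases eq_or_lt_of_le h12 with rfl | hlt
    · have hab : a = b := Fin.ext (by omega)
      rw [hab]
    · have hTa := hfin a jj n1 ha (by omega)
      have hTb := hfin b jj n2 hb h2
      have hbg : T g b - T g a = ((n2 : ℤ) - (n1 : ℤ)) := by
        rw [hTa, hTb]; push_cast; ring
      have hgap2 := tdl_strictMono_gap (hSM t0 ht0) a b (by omega)
      have hba : ((b : ℕ) : ℤ) - ((a : ℕ) : ℤ) = (n2 : ℤ) - (n1 : ℤ) := by omega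
      linarith
  -- across consecutive layers: w(first of j1) ≤ w(last of j2)
  have hC : ∀ t0, t0 ≤ g → ∀ (j1 j2 : Fin s) (a b : Fin k), (j2 : ℕ) = (j1 : ℕ) + 1 →
      (a : ℕ) = tdlP m j1 → (b : ℕ) = tdlP m j2 + (m j2 - 1) →
      T g a - T t0 a ≤ T g b - T t0 b := by
    intro t0 ht0 j1 j2 a b hj ha hb
    have hTa := hfin a j1 0 (by rw [ha]; simp [tdlP]) (hm1 j1)
    have hTb := hfin b j2 (m j2 - 1) hb (by have := hm1 j2; omega)
    have hQ1 := tdl_Qsum m j1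
    have hQ2 := tdl_Qsum m j2
    have hPs := tdl_Psum_succ m hj
    have hsumS : ∀ jj : Fin s, (∑ ℓ'' : Fin k, (e ℓ'' + (-(d jj)) + 1))
        = (∑ ℓ'' : Fin k, e ℓ'') + (k : ℤ) * (-(d jj) + 1) := by
      intro jj
      rw [Finset.sum_add_distrib, Finset.sum_add_distrib, Finset.sum_const, Finset.sum_const]
      simp [Finset.card_univ, nsmul_eq_mul]
      ring
    have hc1 : ((m j2 - 1 : ℕ) : ℤ) = (m j2 : ℤ) - 1 := by
      have := hm1 j2; omega
    have hc2 : ((tdlP m j2 : ℕ) : ℤ) = ((tdlP m j1 : ℕ) : ℤ) + (m j1 : ℤ) := by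
      rw [hPs]; push_cast; ring
    have hbg : T g b - T g a = (k : ℤ) * (d j1 - d j2 - 1) + ((k : ℤ) - 1) := by
      rw [hTa, hTb, hsumS j1, hsumS j2, hQ1, hQ2, hc1, hc2]
      push_cast
      ring
    have hr : (T g b - T g a) % (k : ℤ) = (k : ℤ) - 1 := by
      rw [hbg]
      have h3 : (k : ℤ) * (d j1 - d j2 - 1) + ((k : ℤ) - 1)
          = ((k : ℤ) - 1) + (k : ℤ) * (d j1 - d j2 - 1) := by ring
      rw [h3, Int.add_mul_emod_self_left, Int.emod_eq_of_lt (by linarith) (by linarith)]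
    have hab : a < b := by
      rw [Fin.lt_def]
      have := hm1 j1
      have := hm1 j2
      omega
    have h1 := hM' t0 ht0 a b hab
    rw [hr] at h1
    linarith
  -- chain across several layers
  have hChain : ∀ (u : ℕ) (j1 j2 : Fin s) (a b : Fin k), (j2 : ℕ) = (j1 : ℕ) + 1 + u →
      (a : ℕ) = tdlP m j1 → (b : ℕ) = tdlP m j2 + (m j2 - 1) →
      T g a - T t a ≤ T g b - T t b := by
    intro u
    induction u with
    | zero =>
      intro j1 j2 a b hj ha hb
      exact hC t ht j1 j2 a b (by omega) ha hb
    | succ u ih =>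
      intro j1 j2 a b hj ha hb
      have hks : (j1 : ℕ) + 1 + u < s := by have := j2.isLt; omega
      set jp : Fin s := ⟨(j1 : ℕ) + 1 + u, hks⟩ with hjp
      have hPm := tdl_Psum_le m hsum jp
      have hmp := hm1 jp
      have hamid : tdlP m jp < k := by omega
      have hbmid : tdlP m jp + (m jp - 1) < k := by omega
      have h1 := ih j1 jp a ⟨tdlP m jp + (m jp - 1), hbmid⟩ rfl ha rfl
      have h2 := hW t ht jp 0 (m jp - 1) ⟨tdlP m jp, hamid⟩ ⟨tdlP m jp + (m jp - 1), hbmid⟩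
        (by simp) rfl (by omega) (by omega)
      have h3 := hC t ht jp j2 ⟨tdlP m jp, hamid⟩ b (by simp [hjp]; omega) rfl hb
      linarith
  -- assemble
  have hPj := tdl_Psum_le m hsum j
  have hPj' := tdl_Psum_le m hsum j'
  have hmj := hm1 j
  have hmj' := hm1 j'
  have ha0 : tdlP m j < k := by omega
  have hb0 : tdlP m j' + (m j' - 1) < k := by omega
  have h1 := hW t ht j 0 n ⟨tdlP m j, ha0⟩ ℓ (by simp) hℓ (by omega) hn
  have h3 := hW t ht j' n' (m j' - 1) ℓ' ⟨tdlP m j' + (m j' - 1), hb0⟩ hℓ' rfl (by omega) (by omega)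
  have h2 := hChain ((j' : ℕ) - (j : ℕ) - 1) j j' ⟨tdlP m j, ha0⟩ ⟨tdlP m j' + (m j' - 1), hb0⟩
    (by have : (j : ℕ) < (j' : ℕ) := hjj'; omega) rfl rfl
  linarith
end

section
/- Let A and B be commutative rings, let I_0 ⊇ I_1 ⊇ ⋯ ⊇ I_m be a decreasing chain of ideals of A with I_0 = A, and let J_0 ⊇ J_1 ⊇ ⋯ ⊇ J_m be a decreasing chain of ideals of B with J_0 = B. Then in A ⊗ B the ideal ∑_{i+j=m} (I_i ⊗ B) ∩ (A ⊗ J_j) equals ∩_{i+j=m+1} (I_i ⊗ B + A ⊗ J_j). -/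
open TensorProduct

lemma chain_inf_sup_identity {α : Type*} [CompleteLattice α] [IsModularLattice α]
    (a : ℕ → α) (ha : ∀ i j : ℕ, i ≤ j → a j ≤ a i) :
    ∀ m : ℕ, 1 ≤ m → ∀ b : ℕ → α, (∀ i j : ℕ, i ≤ j → b j ≤ b i) →
      (⨅ i ∈ Finset.Icc 1 m, (a i ⊔ b (m + 1 - i)))
        = a m ⊔ b m ⊔ ⨆ i ∈ Finset.Icc 1 (m - 1), (a i ⊓ b (m - i)) := by
  intro m hm
  induction m, hm using Nat.le_induction with
  | base => intro b hb; simp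
  | succ m hm ih =>
    intro b hb
    have key := ih (fun j => b (j + 1)) (fun i j h => hb _ _ (by omega))
    have hins : Finset.Icc 1 (m + 1) = insert (m + 1) (Finset.Icc 1 m) := by
      ext x; simp [Finset.mem_Icc, Finset.mem_insert]; omega
    rw [hins, Finset.iInf_insert]
    have hcong : (⨅ i ∈ Finset.Icc 1 m, (a i ⊔ b (m + 1 + 1 - i)))
        = ⨅ i ∈ Finset.Icc 1 m, (a i ⊔ b (m + 1 - i + 1)) := by
      refine biInf_congr fun i hi => ?_
      simp only [Finset.mem_Icc] at hi
      congr 2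
      omega
    rw [hcong, key]
    have e1 : m + 1 + 1 - (m + 1) = 1 := by omega
    have e2 : m + 1 - 1 = m := by omega
    rw [e1, e2]
    set X := ⨆ i ∈ Finset.Icc 1 (m - 1), (a i ⊓ b (m - i + 1)) with hX
    have hcle : b (m + 1) ⊔ X ≤ a (m + 1) ⊔ b 1 := by
      refine sup_le ((hb 1 (m + 1) (by omega)).trans le_sup_right) ?_
      refine (iSup₂_le fun i hi => ?_).trans (le_sup_right : b 1 ≤ _)
      exact inf_le_right.trans (hb 1 (m - i + 1) (by omega))
    have lhs_eq : (a (m + 1) ⊔ b 1) ⊓ (a m ⊔ b (m + 1) ⊔ X)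
        = (b (m + 1) ⊔ X) ⊔ (a (m + 1) ⊔ (a m ⊓ b 1)) := by
      have h1 : a m ⊔ b (m + 1) ⊔ X = (b (m + 1) ⊔ X) ⊔ a m := by ac_rfl
      rw [h1, inf_comm, sup_inf_assoc_of_le _ hcle]
      congr 1
      rw [inf_comm, sup_inf_assoc_of_le _ (ha m (m + 1) (by omega)), inf_comm]
    rw [lhs_eq]
    have hins2 : Finset.Icc 1 m = insert m (Finset.Icc 1 (m - 1)) := by
      ext x; simp [Finset.mem_Icc, Finset.mem_insert]; omega
    rw [hins2, Finset.iSup_insert]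
    have e3 : m + 1 - m = 1 := by omega
    rw [e3]
    have hcong2 : (⨆ i ∈ Finset.Icc 1 (m - 1), (a i ⊓ b (m + 1 - i)))
        = ⨆ i ∈ Finset.Icc 1 (m - 1), (a i ⊓ b (m - i + 1)) := by
      refine biSup_congr fun i hi => ?_
      simp only [Finset.mem_Icc] at hi
      congr 2
      omega
    rw [hcong2, ← hX]
    ac_rfl

/-- for decreasing chains of ideals `I₀ = A ⊇ I₁ ⊇ ⋯` of `A` and
`J₀ = B ⊇ J₁ ⊇ ⋯` of `B`, in `A ⊗ B` one has
`∑_{i+j=m} (I_i ⊗ B) ∩ (A ⊗ J_j) = ⋂_{i+j=m+1} (I_i ⊗ B + A ⊗ J_j)`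
(schematically, `⋂_{i+j=m} [(Y_i × Z) ∪ (Y × Z_j)] = ⋃_{i+j=m+1} Y_i × Z_j`). -/
theorem nested_chain_intersection_union_identity
    (R A B : Type*) [CommRing R] [CommRing A] [CommRing B]
    [Algebra R A] [Algebra R B] (m : ℕ)
    (I : ℕ → Ideal A) (J : ℕ → Ideal B)
    (hI : ∀ i j : ℕ, i ≤ j → I j ≤ I i) (hI0 : I 0 = ⊤)
    (hJ : ∀ i j : ℕ, i ≤ j → J j ≤ J i) (hJ0 : J 0 = ⊤) :
    (⨆ i ∈ Finset.range (m + 1),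
        (Ideal.map (Algebra.TensorProduct.includeLeft : A →ₐ[R] A ⊗[R] B) (I i) ⊓
          Ideal.map (Algebra.TensorProduct.includeRight : B →ₐ[R] A ⊗[R] B) (J (m - i))))
      = ⨅ i ∈ Finset.Icc 1 m,
          (Ideal.map (Algebra.TensorProduct.includeLeft : A →ₐ[R] A ⊗[R] B) (I i) ⊔
            Ideal.map (Algebra.TensorProduct.includeRight : B →ₐ[R] A ⊗[R] B) (J (m + 1 - i))) := by
  set a : ℕ → Ideal (A ⊗[R] B) :=
    fun i => Ideal.map (Algebra.TensorProduct.includeLeft : A →ₐ[R] A ⊗[R] B) (I i) with haa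
  set b : ℕ → Ideal (A ⊗[R] B) :=
    fun j => Ideal.map (Algebra.TensorProduct.includeRight : B →ₐ[R] A ⊗[R] B) (J j) with hbb
  have ha : ∀ i j : ℕ, i ≤ j → a j ≤ a i := fun i j h => Ideal.map_mono (hI i j h)
  have hb : ∀ i j : ℕ, i ≤ j → b j ≤ b i := fun i j h => Ideal.map_mono (hJ i j h)
  have ha0 : a 0 = ⊤ := by simp only [haa, hI0, Ideal.map_top]
  have hb0 : b 0 = ⊤ := by simp only [hbb, hJ0, Ideal.map_top]
  show (⨆ i ∈ Finset.range (m + 1), (a i ⊓ b (m - i)))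
      = ⨅ i ∈ Finset.Icc 1 m, (a i ⊔ b (m + 1 - i))
  rcases Nat.eq_zero_or_pos m with hm | hm
  · subst hm
    simp [ha0, hb0]
  · rw [chain_inf_sup_identity a ha m hm b hb]
    have hins : Finset.range (m + 1) = insert 0 (insert m (Finset.Icc 1 (m - 1))) := by
      ext x; simp [Finset.mem_Icc, Finset.mem_insert, Finset.mem_range]; omega
    rw [hins, Finset.iSup_insert, Finset.iSup_insert, ha0, Nat.sub_zero, Nat.sub_self, hb0,
      top_inf_eq, inf_top_eq]
    ac_rfl
end

section
/- Let k ≥ 2, let ζ be a primitive k-th root of unity in a field K of characteristic not dividing k, and let n be an integer with n ≢ 0, ±1 (mod k). Consider the polynomial P(x) = (ζ^{n+1} − 1)·x² + (ζ − ζ^{n+1})·e_1·x + (ζ^{n+1} − ζ²)·e_2 ∈ K(e_1, e_2)[x], where e_1, e_2 are independent transcendentals. Then ζ^{n+1} − 1 ≠ 0, ζ^{n+1} − ζ² ≠ 0, and P is irreducible over K(e_1, e_2). -/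
open Polynomial

set_option maxHeartbeats 1000000 in
set_option synthInstance.maxHeartbeats 400000 in
private theorem flip_aux {K : Type*} [Field K] (a b c : K)
    (ha : a ≠ 0) (hb : b ≠ 0) (hc : c ≠ 0) :
    Irreducible (Polynomial.C (algebraMap (MvPolynomial (Fin 2) K)
        (FractionRing (MvPolynomial (Fin 2) K)) (MvPolynomial.C a)) * Polynomial.X ^ 2
      + Polynomial.C (algebraMap (MvPolynomial (Fin 2) K)
          (FractionRing (MvPolynomial (Fin 2) K)) (MvPolynomial.C b)
        * algebraMap (MvPolynomial (Fin 2) K)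
          (FractionRing (MvPolynomial (Fin 2) K)) (MvPolynomial.X 0)) * Polynomial.X
      + Polynomial.C (algebraMap (MvPolynomial (Fin 2) K)
          (FractionRing (MvPolynomial (Fin 2) K)) (MvPolynomial.C c)
        * algebraMap (MvPolynomial (Fin 2) K)
          (FractionRing (MvPolynomial (Fin 2) K)) (MvPolynomial.X 1))) := by
  set R := MvPolynomial (Fin 2) K with hRdef
  set F := FractionRing R with hFdef
  set φ := algebraMap R F with hφdef
  have hφi : Function.Injective φ := IsFractionRing.injective R F
  have ha' : φ (MvPolynomial.C a) ≠ 0 := fun h => ha (by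
    have := hφi (h.trans (map_zero φ).symm)
    simpa [MvPolynomial.C_eq_zero] using this)
  have hc' : φ (MvPolynomial.C c) ≠ 0 := fun h => hc (by
    have := hφi (h.trans (map_zero φ).symm)
    simpa [MvPolynomial.C_eq_zero] using this)
  set P : Polynomial F := Polynomial.C (φ (MvPolynomial.C a)) * Polynomial.X ^ 2
      + Polynomial.C (φ (MvPolynomial.C b) * φ (MvPolynomial.X 0)) * Polynomial.X
      + Polynomial.C (φ (MvPolynomial.C c) * φ (MvPolynomial.X 1)) with hPdef
  have hdeg : P.natDegree = 2 := Polynomial.natDegree_quadratic ha'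
  rw [Polynomial.irreducible_iff_roots_eq_zero_of_degree_le_three hdeg.ge
    (hdeg.le.trans (by norm_num)), Multiset.eq_zero_iff_forall_notMem]
  intro x hx
  have hP0 : P ≠ 0 := fun h => by simp [h] at hdeg
  have hroot : Polynomial.eval x P = 0 := (Polynomial.mem_roots hP0).mp hx
  have heq : φ (MvPolynomial.C a) * x ^ 2
      + φ (MvPolynomial.C b) * φ (MvPolynomial.X 0) * x
      + φ (MvPolynomial.C c) * φ (MvPolynomial.X 1) = 0 := by
    simpa [hPdef] using hroot
  -- x is integral over R
  have hab : a * (b / a) = b := by field_simp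
  have hac : a * (c / a) = c := by field_simp
  have hB : φ (MvPolynomial.C a) * φ (MvPolynomial.C (b / a)) = φ (MvPolynomial.C b) := by
    rw [← map_mul, ← map_mul, hab]
  have hC : φ (MvPolynomial.C a) * φ (MvPolynomial.C (c / a)) = φ (MvPolynomial.C c) := by
    rw [← map_mul, ← map_mul, hac]
  set q : Polynomial R := Polynomial.X ^ 2
      + (Polynomial.C (MvPolynomial.C (b / a) * MvPolynomial.X 0) * Polynomial.X
        + Polynomial.C (MvPolynomial.C (c / a) * MvPolynomial.X 1)) with hqdef
  have hq : q.Monic := by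
    apply Polynomial.monic_X_pow_add
    apply lt_of_le_of_lt (Polynomial.degree_add_le _ _)
    apply max_lt
    · exact lt_of_le_of_lt (Polynomial.degree_C_mul_X_le _) (by norm_num)
    · exact lt_of_le_of_lt Polynomial.degree_C_le (by norm_num)
  have haev : Polynomial.aeval x q
      = x ^ 2 + (φ (MvPolynomial.C (b / a)) * φ (MvPolynomial.X 0) * x
        + φ (MvPolynomial.C (c / a)) * φ (MvPolynomial.X 1)) := by
    simp only [hqdef, map_add, map_pow, map_mul, Polynomial.aeval_X, Polynomial.aeval_C, ← hφdef]
  have h5 : φ (MvPolynomial.C a) * Polynomial.aeval x q = 0 := by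
    rw [haev]
    linear_combination heq + (φ (MvPolynomial.X 0) * x) * hB + φ (MvPolynomial.X 1) * hC
  have hintegral : IsIntegral R x := ⟨q, hq, by
    rw [← Polynomial.aeval_def]
    exact (mul_eq_zero.mp h5).resolve_left ha'⟩
  obtain ⟨p, hp⟩ := IsIntegrallyClosed.isIntegral_iff.mp hintegral
  rw [← hφdef] at hp
  have hRq : MvPolynomial.C a * p ^ 2 + MvPolynomial.C b * MvPolynomial.X 0 * p
      + MvPolynomial.C c * MvPolynomial.X 1 = 0 := by
    apply hφi
    rw [map_zero]
    simp only [map_add, map_mul, map_pow, hp]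
    linear_combination heq
  -- specialize X 0 ↦ 0, X 1 ↦ X
  have hθ := congrArg (MvPolynomial.aeval (R := K) ![(0 : Polynomial K), Polynomial.X]) hRq
  set u : Polynomial K := MvPolynomial.aeval ![(0 : Polynomial K), Polynomial.X] p with hudef
  simp only [map_add, map_mul, map_pow, map_zero, MvPolynomial.aeval_C,
    MvPolynomial.aeval_X, Matrix.cons_val_zero, Matrix.cons_val_one, Matrix.head_cons,
    mul_zero, zero_mul, add_zero, Polynomial.algebraMap_eq] at hθ
  rw [← hudef] at hθ
  have hu : Polynomial.C a * u ^ 2 = -(Polynomial.C c * Polynomial.X) := by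
    linear_combination hθ
  have hrhs : -(Polynomial.C c * Polynomial.X) ≠ 0 := by
    simp [hc, Polynomial.X_ne_zero]
  have hu0 : u ≠ 0 := by
    rintro h
    apply hrhs
    rw [← hu, h]
    ring
  have d1 : (Polynomial.C a * u ^ 2).natDegree = 2 * u.natDegree := by
    rw [Polynomial.natDegree_C_mul ha, Polynomial.natDegree_pow]
  rw [hu, Polynomial.natDegree_neg, Polynomial.natDegree_C_mul hc,
    Polynomial.natDegree_X] at d1
  omega

/-- for `ζ` a primitive `k`-th root of unity (`k ≥ 2`, characteristic not
dividing `k`) and `n ≢ 0, ±1 (mod k)`, one has `ζ^{n+1} − 1 ≠ 0`, `ζ^{n+1} − ζ² ≠ 0`,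
and the quadratic
`P(x) = (ζ^{n+1} − 1)·x² + (ζ − ζ^{n+1})·e₁·x + (ζ^{n+1} − ζ²)·e₂`
is irreducible over the rational function field `K(e₁, e₂)`. -/
theorem flip_cover_quadratic_irreducible
    (K : Type*) [Field K] (k : ℕ) (hk : 2 ≤ k) (hchar : (k : K) ≠ 0)
    (ζ : K) (hζ : IsPrimitiveRoot ζ k) (n : ℤ)
    (hn0 : ¬ (n ≡ 0 [ZMOD (k : ℤ)])) (hn1 : ¬ (n ≡ 1 [ZMOD (k : ℤ)]))
    (hn2 : ¬ (n ≡ -1 [ZMOD (k : ℤ)])) :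
    ζ ^ (n + 1) - 1 ≠ 0 ∧ ζ ^ (n + 1) - ζ ^ (2 : ℤ) ≠ 0 ∧
      (let F := FractionRing (MvPolynomial (Fin 2) K)
       let φ := algebraMap (MvPolynomial (Fin 2) K) F
       let z := φ (MvPolynomial.C ζ)
       let e1 := φ (MvPolynomial.X 0)
       let e2 := φ (MvPolynomial.X 1)
       Irreducible (Polynomial.C (z ^ (n + 1) - 1) * Polynomial.X ^ 2
         + Polynomial.C ((z - z ^ (n + 1)) * e1) * Polynomial.X
         + Polynomial.C ((z ^ (n + 1) - z ^ (2 : ℤ)) * e2))) := by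
  have hζ0 : ζ ≠ 0 := hζ.ne_zero (by omega)
  have hd1 : ¬ ((k : ℤ) ∣ (n + 1)) := by
    intro h
    exact hn2 (Int.ModEq.symm (Int.modEq_iff_dvd.mpr (by simpa using h)))
  have hd0 : ¬ ((k : ℤ) ∣ n) := by
    intro h
    exact hn0 (Int.ModEq.symm (Int.modEq_iff_dvd.mpr (by simpa using h)))
  have hd2 : ¬ ((k : ℤ) ∣ (n - 1)) := by
    intro h
    exact hn1 (Int.ModEq.symm (Int.modEq_iff_dvd.mpr (by simpa using h)))
  have ha : ζ ^ (n + 1) - 1 ≠ 0 := by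
    rw [sub_ne_zero]
    intro h
    exact hd1 ((hζ.zpow_eq_one_iff_dvd _).mp h)
  have hb : ζ - ζ ^ (n + 1) ≠ 0 := by
    rw [sub_ne_zero]
    intro h
    apply hd0
    have h2 : ζ ^ (n : ℤ) * ζ = 1 * ζ := by
      rw [one_mul, ← zpow_add_one₀ hζ0]
      exact h.symm
    exact (hζ.zpow_eq_one_iff_dvd _).mp (mul_right_cancel₀ hζ0 h2)
  have hc : ζ ^ (n + 1) - ζ ^ (2 : ℤ) ≠ 0 := by
    rw [sub_ne_zero]
    intro h
    apply hd2
    have h2 : ζ ^ (n + 1) * (ζ ^ (2 : ℤ))⁻¹ = 1 := by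
      rw [h, mul_inv_cancel₀]
      exact zpow_ne_zero _ hζ0
    rw [← zpow_neg, ← zpow_add₀ hζ0] at h2
    have h3 : ζ ^ (n - 1 : ℤ) = 1 := by
      convert h2 using 2
      ring
    exact (hζ.zpow_eq_one_iff_dvd _).mp h3
  refine ⟨ha, hc, ?_⟩
  intro F φ z e1 e2
  set ψ : K →+* F := φ.comp (MvPolynomial.C) with hψdef
  have hz : z = ψ ζ := rfl
  have hz1 : z ^ (n + 1) = ψ (ζ ^ (n + 1)) := by rw [hz, ← map_zpow₀]
  have hz2 : z ^ (2 : ℤ) = ψ (ζ ^ (2 : ℤ)) := by rw [hz, ← map_zpow₀]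
  have hca : z ^ (n + 1) - 1 = φ (MvPolynomial.C (ζ ^ (n + 1) - 1)) := by
    rw [hz1]
    show _ = ψ _
    rw [map_sub, map_one]
  have hcb : z - z ^ (n + 1) = φ (MvPolynomial.C (ζ - ζ ^ (n + 1))) := by
    rw [hz1, hz]
    show _ = ψ _
    rw [map_sub]
  have hcc : z ^ (n + 1) - z ^ (2 : ℤ) = φ (MvPolynomial.C (ζ ^ (n + 1) - ζ ^ (2 : ℤ))) := by
    rw [hz1, hz2]
    show _ = ψ _
    rw [map_sub]
  rw [hca, hcb, hcc]
  exact flip_aux _ _ _ ha hb hc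
end

section
/- Let k ≥ 3, let ζ be a primitive k-th root of unity in a field K of characteristic not dividing k. Consider Q(x) = (ζ + 1)·e_2·x² − [ζ·e_2 + (ζ² + ζ + 1)·e_3]·x + (ζ² + ζ)·e_3 ∈ K(e_2, e_3)[x], with e_2, e_3 independent transcendentals. Then ζ + 1 ≠ 0, ζ² + ζ ≠ 0, (ζ²+ζ)/(ζ²+ζ+1) ≠ ζ/(ζ+1) when ζ²+ζ+1 ≠ 0, and Q is irreducible over K(e_2, e_3). -/
open Polynomial

lemma aux_one_var {K : Type*} [Field K] (ζ : K) (hz : ζ ≠ 0) (h1 : ζ + 1 ≠ 0)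
    (s : K[X])
    (h : s ^ 2 - (C ζ * X + C (ζ ^ 2 + ζ + 1) * X ^ 2) * s + C (ζ * (ζ + 1) ^ 2) * X ^ 3 = 0) :
    False := by
  have hc0 : ζ * (ζ + 1) ^ 2 ≠ 0 := mul_ne_zero hz (pow_ne_zero _ h1)
  have hs0 : s ≠ 0 := by
    rintro rfl
    rw [show (0 : K[X]) ^ 2 - (C ζ * X + C (ζ ^ 2 + ζ + 1) * X ^ 2) * 0
        + C (ζ * (ζ + 1) ^ 2) * X ^ 3 = C (ζ * (ζ + 1) ^ 2) * X ^ 3 from by ring] at h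
    have := (mul_eq_zero.1 h).resolve_right (pow_ne_zero _ X_ne_zero)
    exact hc0 (C_eq_zero.1 this)
  have hdvd : s ∣ C (ζ * (ζ + 1) ^ 2) * X ^ 3 := by
    refine ⟨(C ζ * X + C (ζ ^ 2 + ζ + 1) * X ^ 2) - s, ?_⟩
    linear_combination h
  have hdvdX : s ∣ X ^ 3 := by
    have hu : IsUnit (C (ζ * (ζ + 1) ^ 2)) := isUnit_C.2 (isUnit_iff_ne_zero.2 hc0)
    exact hu.dvd_mul_left.mp hdvd
  obtain ⟨i, hi, c, hcu, hs⟩ : ∃ i ≤ 3, ∃ c : K, IsUnit c ∧ s = C c * X ^ i := by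
    obtain ⟨i, hi, ha⟩ := (dvd_prime_pow prime_X 3).1 hdvdX
    obtain ⟨u, hu⟩ := ha.symm
    obtain ⟨c, hcu, hCc⟩ := Polynomial.isUnit_iff.1 u.isUnit
    exact ⟨i, hi, c, hcu, by rw [← hu, ← hCc]; ring⟩
  have hc : (c : K) ≠ 0 := hcu.ne_zero
  rw [hs] at h
  have h' : C (c ^ 2) * X ^ (2 * i) - C (ζ * c) * X ^ (i + 1)
      - C ((ζ ^ 2 + ζ + 1) * c) * X ^ (i + 2) + C (ζ * (ζ + 1) ^ 2) * X ^ 3 = 0 := by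
    rw [C_pow, C_mul, C_mul]
    linear_combination h
  interval_cases i
  · have h3 := congrArg (fun p => p.coeff 3) h'
    simp only [coeff_add, coeff_sub, coeff_C_mul, coeff_X_pow, coeff_zero] at h3
    norm_num at h3
    rcases h3 with h0 | h0
    exacts [hz h0, h1 h0]
  · have h2 := congrArg (fun p => p.coeff 2) h'
    have h3 := congrArg (fun p => p.coeff 3) h'
    simp only [coeff_add, coeff_sub, coeff_C_mul, coeff_X_pow, coeff_zero] at h2 h3
    norm_num at h2 h3
    have hcz : c = ζ := by
      have hcc : c * (c - ζ) = 0 := by linear_combination h2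
      rcases mul_eq_zero.1 hcc with h0 | h0
      · exact absurd h0 hc
      · exact sub_eq_zero.1 h0
    rw [hcz] at h3
    exact hz (pow_eq_zero_iff two_ne_zero |>.1 (by linear_combination h3))
  · have h3 := congrArg (fun p => p.coeff 3) h'
    have h4 := congrArg (fun p => p.coeff 4) h'
    simp only [coeff_add, coeff_sub, coeff_C_mul, coeff_X_pow, coeff_zero] at h3 h4
    norm_num at h3 h4
    have hcz : c = ζ ^ 2 + ζ + 1 := by
      have hcc : c * (c - (ζ ^ 2 + ζ + 1)) = 0 := by linear_combination h4
      rcases mul_eq_zero.1 hcc with h0 | h0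
      · exact absurd h0 hc
      · exact sub_eq_zero.1 h0
    rw [hcz] at h3
    exact hz (pow_eq_zero_iff two_ne_zero |>.1 (by linear_combination h3))
  · have h6 := congrArg (fun p => p.coeff 6) h'
    simp only [coeff_add, coeff_sub, coeff_C_mul, coeff_X_pow, coeff_zero] at h6
    norm_num at h6
    exact hc h6

/-- Two-variable version: the corresponding equation has no solution in `K[e₂,e₃]`. -/
lemma aux_mv {K : Type*} [Field K] (ζ : K) (hz : ζ ≠ 0) (h1 : ζ + 1 ≠ 0)
    (t : MvPolynomial (Fin 2) K)
    (h : t ^ 2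
        - (MvPolynomial.C ζ * MvPolynomial.X 0
            + MvPolynomial.C (ζ ^ 2 + ζ + 1) * MvPolynomial.X 1) * t
        + MvPolynomial.C (ζ * (ζ + 1) ^ 2) * MvPolynomial.X 0 * MvPolynomial.X 1 = 0) :
    False := by
  have h2 := congrArg (MvPolynomial.aeval ![(X : K[X]), X ^ 2]) h
  simp only [map_add, map_sub, map_mul, map_pow, MvPolynomial.aeval_X, MvPolynomial.aeval_C,
    Matrix.cons_val_zero, Matrix.cons_val_one, Matrix.head_cons, map_zero,
    Polynomial.algebraMap_eq] at h2
  simp only [map_one] at h2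
  apply aux_one_var ζ hz h1 ((MvPolynomial.aeval ![(X : K[X]), X ^ 2]) t)
  rw [show (C (ζ ^ 2 + ζ + 1) : K[X]) = C ζ ^ 2 + C ζ + 1 from by
        simp only [map_add, map_pow, map_one],
      show (C (ζ * (ζ + 1) ^ 2) : K[X]) = C ζ * (C ζ + 1) ^ 2 from by
        simp only [map_mul, map_add, map_pow, map_one]]
  linear_combination h2

set_option maxHeartbeats 2000000
set_option synthInstance.maxHeartbeats 1000000

lemma aux_irred {K : Type*} [Field K] (ζ : K) (hz0 : ζ ≠ 0) (h1 : ζ + 1 ≠ 0) :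
    (let F := FractionRing (MvPolynomial (Fin 2) K)
     let φ := algebraMap (MvPolynomial (Fin 2) K) F
     let z := φ (MvPolynomial.C ζ)
     let e2 := φ (MvPolynomial.X 0)
     let e3 := φ (MvPolynomial.X 1)
     Irreducible (Polynomial.C ((z + 1) * e2) * Polynomial.X ^ 2
       - Polynomial.C (z * e2 + (z ^ 2 + z + 1) * e3) * Polynomial.X
       + Polynomial.C ((z ^ 2 + z) * e3))) := by
  intro F φ z e2 e3
  have hφ : φ = algebraMap (MvPolynomial (Fin 2) K) F := rfl
  have hzdef : z = φ (MvPolynomial.C ζ) := rfl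
  have he2def : e2 = φ (MvPolynomial.X 0) := rfl
  have he3def : e3 = φ (MvPolynomial.X 1) := rfl
  clear_value z e2 e3
  have hinj : Function.Injective φ :=
    hφ ▸ IsFractionRing.injective (MvPolynomial (Fin 2) K) F
  have hz1 : z + 1 ≠ 0 := by
    rw [hzdef, ← map_one φ, ← map_add]
    intro hh
    have h0 : MvPolynomial.C ζ + 1 = 0 := hinj (by rw [hh, map_zero])
    apply h1
    have := congrArg (MvPolynomial.coeff 0) h0
    simpa using this
  have he2 : e2 ≠ 0 := by
    rw [he2def]
    intro hh
    exact MvPolynomial.X_ne_zero (R := K) (0 : Fin 2) (hinj (by rw [hh, map_zero]))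
  have ha : (z + 1) * e2 ≠ 0 := mul_ne_zero hz1 he2
  have hQrw : Polynomial.C ((z + 1) * e2) * Polynomial.X ^ 2
       - Polynomial.C (z * e2 + (z ^ 2 + z + 1) * e3) * Polynomial.X
       + Polynomial.C ((z ^ 2 + z) * e3)
      = Polynomial.C ((z + 1) * e2) * Polynomial.X ^ 2
       + Polynomial.C (-(z * e2 + (z ^ 2 + z + 1) * e3)) * Polynomial.X
       + Polynomial.C ((z ^ 2 + z) * e3) := by
    rw [map_neg]; ring
  rw [hQrw]
  have hdeg : (Polynomial.C ((z + 1) * e2) * Polynomial.X ^ 2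
       + Polynomial.C (-(z * e2 + (z ^ 2 + z + 1) * e3)) * Polynomial.X
       + Polynomial.C ((z ^ 2 + z) * e3)).natDegree = 2 := natDegree_quadratic ha
  rw [irreducible_iff_roots_eq_zero_of_degree_le_three (le_of_eq hdeg.symm)
    (hdeg.le.trans (by norm_num))]
  rw [Multiset.eq_zero_iff_forall_notMem]
  intro r hr
  have hQne : (Polynomial.C ((z + 1) * e2) * Polynomial.X ^ 2
       + Polynomial.C (-(z * e2 + (z ^ 2 + z + 1) * e3)) * Polynomial.X
       + Polynomial.C ((z ^ 2 + z) * e3)) ≠ 0 := fun hh => by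
    rw [hh] at hdeg; simp at hdeg
  rw [mem_roots hQne] at hr
  have heval : (z + 1) * e2 * r ^ 2 + -(z * e2 + (z ^ 2 + z + 1) * e3) * r
      + (z ^ 2 + z) * e3 = 0 := by
    have h0 := hr
    simp only [Polynomial.IsRoot, eval_add, eval_mul, eval_pow, eval_C, eval_X] at h0
    linear_combination h0
  -- the element s = ((z+1)e2)·r is integral over the polynomial ring
  have hint : IsIntegral (MvPolynomial (Fin 2) K) ((z + 1) * e2 * r) := by
    refine ⟨Polynomial.X ^ 2
      + (Polynomial.C (-(MvPolynomial.C ζ * MvPolynomial.X 0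
          + MvPolynomial.C (ζ ^ 2 + ζ + 1) * MvPolynomial.X 1)) * Polynomial.X
        + Polynomial.C (MvPolynomial.C (ζ * (ζ + 1) ^ 2)
            * MvPolynomial.X 0 * MvPolynomial.X 1)), ?_, ?_⟩
    · exact monic_X_pow_add (lt_of_le_of_lt degree_linear_le (by norm_num))
    · simp only [eval₂_add, eval₂_mul, eval₂_pow, eval₂_X, eval₂_C]
      simp only [map_neg, map_add, map_mul, map_pow, map_one]
      rw [← hzdef, ← he2def, ← he3def]
      linear_combination ((z + 1) * e2) * heval
  obtain ⟨t, ht⟩ := IsIntegrallyClosed.isIntegral_iff.1 hint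
  rw [← hφ] at ht
  -- transfer the equation into the polynomial ring
  have htR : t ^ 2
      - (MvPolynomial.C ζ * MvPolynomial.X 0
          + MvPolynomial.C (ζ ^ 2 + ζ + 1) * MvPolynomial.X 1) * t
      + MvPolynomial.C (ζ * (ζ + 1) ^ 2) * MvPolynomial.X 0 * MvPolynomial.X 1 = 0 := by
    apply hinj
    rw [map_zero]
    simp only [map_add, map_sub, map_mul, map_pow, map_one]
    rw [← hzdef, ← he2def, ← he3def, ht]
    linear_combination ((z + 1) * e2) * heval
  exact absurd htR (by intro hh; exact aux_mv ζ hz0 h1 t hh)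

/-- for `ζ` a primitive `k`-th root of unity (`k ≥ 3`, characteristic not
dividing `k`), one has `ζ + 1 ≠ 0`, `ζ² + ζ ≠ 0`, the inequality
`(ζ²+ζ)/(ζ²+ζ+1) ≠ ζ/(ζ+1)` when `ζ²+ζ+1 ≠ 0`, and the quadratic
`Q(x) = (ζ+1)·e₂·x² − [ζ·e₂ + (ζ²+ζ+1)·e₃]·x + (ζ²+ζ)·e₃`
is irreducible over the rational function field `K(e₂, e₃)`. -/
theorem shuffle_cover_quadratic_irreducible
    (K : Type*) [Field K] (k : ℕ) (hk : 3 ≤ k) (hchar : (k : K) ≠ 0)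
    (ζ : K) (hζ : IsPrimitiveRoot ζ k) :
    ζ + 1 ≠ 0 ∧ ζ ^ 2 + ζ ≠ 0 ∧
      (ζ ^ 2 + ζ + 1 ≠ 0 → (ζ ^ 2 + ζ) / (ζ ^ 2 + ζ + 1) ≠ ζ / (ζ + 1)) ∧
      (let F := FractionRing (MvPolynomial (Fin 2) K)
       let φ := algebraMap (MvPolynomial (Fin 2) K) F
       let z := φ (MvPolynomial.C ζ)
       let e2 := φ (MvPolynomial.X 0)
       let e3 := φ (MvPolynomial.X 1)
       Irreducible (Polynomial.C ((z + 1) * e2) * Polynomial.X ^ 2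
         - Polynomial.C (z * e2 + (z ^ 2 + z + 1) * e3) * Polynomial.X
         + Polynomial.C ((z ^ 2 + z) * e3))) := by
  have hk0 : k ≠ 0 := by omega
  have hz0 : ζ ≠ 0 := by
    intro h
    have hpow := hζ.pow_eq_one
    rw [h] at hpow
    rw [zero_pow hk0] at hpow
    exact zero_ne_one hpow
  have h1 : ζ + 1 ≠ 0 := by
    intro h
    have hsq : ζ ^ 2 = 1 := by linear_combination (ζ - 1) * h
    have := Nat.le_of_dvd (by norm_num) (hζ.dvd_of_pow_eq_one 2 hsq)
    omega
  have h2 : ζ ^ 2 + ζ ≠ 0 := by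
    intro h
    rcases mul_eq_zero.1 (show ζ * (ζ + 1) = 0 by linear_combination h) with h0 | h0
    exacts [hz0 h0, h1 h0]
  refine ⟨h1, h2, ?_, aux_irred ζ hz0 h1⟩
  intro h3 heq
  rw [div_eq_div_iff h3 h1] at heq
  exact hz0 (pow_eq_zero_iff two_ne_zero |>.1 (by linear_combination heq))
end
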